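/- arXiv:math/0612065 — 9 statements merged into one kernel-verified Lean document; each statement's English description precedes it below -/
import Mathlib

section
/- Let $F$ be a field and let $u_1,\dots,u_r$ be distinct nonzero elements of $F$ such that $u_i u_j \neq 1$ for all $i,j$. Then the $r\times r$ matrix with $(i,j)$ entry $1/(1-u_i u_j)$ is invertible. -/
/-!
Writing `1 / (1 - uᵢ uⱼ) = (uᵢ - uⱼ⁻¹)⁻¹ · (-uⱼ⁻¹)` exhibits the matrix as a Cauchy matrix
`((xᵢ - yⱼ)⁻¹)` with `x = u`, `y = u⁻¹`, times an invertible diagonal matrix. A Cauchy matrix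
with distinct `xᵢ`, distinct `yⱼ` and `xᵢ ≠ yⱼ` is invertible: by the barycentric formula,
`(C w)ᵢ` is, up to the nonzero factor `∏ⱼ (xᵢ - yⱼ)`, the value at `xᵢ` of the Lagrange
interpolant through the points `yⱼ` with values `wⱼ / ωⱼ` (`ωⱼ` the nodal weights). If `C w = 0`
this polynomial of degree `< r` has the `r` roots `xᵢ`, so it vanishes, and then so do its
values `wⱼ`.
-/

open Polynomial Finset Lagrange

namespace Matrix

variable {ι F : Type*} [Field F]

def cauchy (x y : ι → F) : Matrix ι ι F :=
  of fun i j => (x i - y j)⁻¹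

theorem of_inv_one_sub_mul_eq_cauchy_mul_diagonal [Fintype ι] [DecidableEq ι] {u : ι → F}
    (hu : ∀ i, u i ≠ 0) :
    of (fun i j => (1 - u i * u j)⁻¹) =
      cauchy u (fun j => (u j)⁻¹) * diagonal fun j => -(u j)⁻¹ := by
  ext i j
  rw [of_apply, mul_diagonal, cauchy, of_apply, mul_neg, ← mul_inv, sub_mul,
    inv_mul_cancel₀ (hu j), ← inv_neg, neg_sub]

variable [Fintype ι] [DecidableEq ι] {x y : ι → F}

theorem eval_interpolate_eq_nodal_mul_cauchy_mulVec (hxy : ∀ i j, x i ≠ y j) (c : ι → F)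
    (i : ι) :
    (interpolate univ y c).eval (x i) =
      (nodal univ y).eval (x i) * (cauchy x y *ᵥ fun j => nodalWeight univ y j * c j) i := by
  rw [eval_interpolate_not_at_node c fun j _ => hxy i j]
  simp only [cauchy, mulVec, dotProduct, of_apply, mul_assoc, mul_left_comm]

theorem cauchy_mulVec_eq_zero_iff (hx : Function.Injective x) (hy : Function.Injective y)
    (hxy : ∀ i j, x i ≠ y j) {w : ι → F} : cauchy x y *ᵥ w = 0 ↔ w = 0 := by
  refine ⟨fun hw => ?_, fun hw => by rw [hw, mulVec_zero]⟩
  set c : ι → F := fun j => (nodalWeight univ y j)⁻¹ * w j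
  have hwc : w = fun j => nodalWeight univ y j * c j := by
    funext j
    rw [mul_inv_cancel_left₀ (nodalWeight_ne_zero hy.injOn (mem_univ j))]
  have hroots : ∀ i, (interpolate univ y c).eval (x i) = 0 := fun i => by
    rw [eval_interpolate_eq_nodal_mul_cauchy_mulVec hxy, ← hwc, hw, Pi.zero_apply, mul_zero]
  have hzero : interpolate univ y c = 0 :=
    eq_zero_of_degree_lt_of_eval_index_eq_zero univ hx.injOn
      (degree_interpolate_lt c hy.injOn) fun i _ => hroots i
  funext j
  simp only [hwc, Pi.zero_apply]
  rw [← eval_interpolate_at_node c hy.injOn (mem_univ j), hzero, eval_zero, mul_zero]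

theorem isUnit_cauchy (hx : Function.Injective x) (hy : Function.Injective y)
    (hxy : ∀ i j, x i ≠ y j) : IsUnit (cauchy x y) := by
  rw [isUnit_iff_isUnit_det, isUnit_iff_ne_zero]
  intro hdet
  obtain ⟨w, hw, hCw⟩ := exists_mulVec_eq_zero_iff.2 hdet
  exact hw ((cauchy_mulVec_eq_zero_iff hx hy hxy).1 hCw)

end Matrix

/-- The Cauchy-type matrix `(1/(1 - uᵢ uⱼ))` built from distinct nonzero elements
`u₁, …, u_r` of a field with `uᵢ uⱼ ≠ 1` for all `i, j` is invertible. -/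
theorem stmt0 {F : Type*} [Field F] {r : ℕ} (u : Fin r → F)
    (hinj : Function.Injective u) (h0 : ∀ i, u i ≠ 0)
    (h1 : ∀ i j, u i * u j ≠ 1) :
    IsUnit (Matrix.of (fun i j : Fin r => (1 - u i * u j)⁻¹)) := by
  have hdisjoint : ∀ i j, u i ≠ (u j)⁻¹ := fun i j h =>
    h1 i j (by rw [h, inv_mul_cancel₀ (h0 j)])
  have hdiag : IsUnit fun j => -(u j)⁻¹ :=
    Pi.isUnit_iff.2 fun j => (neg_ne_zero.2 (inv_ne_zero (h0 j))).isUnit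
  rw [Matrix.of_inv_one_sub_mul_eq_cauchy_mul_diagonal h0]
  exact (Matrix.isUnit_cauchy hinj (inv_injective.comp hinj) hdisjoint).mul
    (Matrix.isUnit_diagonal.2 hdiag)
end

section
/- Let $u_1,\dots,u_r$ be distinct nonzero complex numbers with $u_i u_j \neq 1$ for all $i,j$. Then for every $i$ with $1 \le i \le r$, $\sum_{j=1}^r \prod_{\ell \neq i}(u_\ell u_j - 1) \prod_{\ell \neq j} \frac{u_\ell}{u_j - u_\ell} = 1$. -/
open Finset

open Polynomial

/-- For distinct nonzero complex numbers `u₁, …, u_r` with `uᵢ uⱼ ≠ 1` for all `i, j`,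
and every `i`, one has
`∑ⱼ ∏_{ℓ ≠ i} (u_ℓ u_j − 1) · ∏_{ℓ ≠ j} u_ℓ/(u_j − u_ℓ) = 1`. -/
theorem stmt1 {r : ℕ} (u : Fin r → ℂ) (hinj : Function.Injective u)
    (h0 : ∀ i, u i ≠ 0) (h1 : ∀ i j, u i * u j ≠ 1) (i : Fin r) :
    ∑ j, (∏ ℓ ∈ univ.erase i, (u ℓ * u j - 1)) *
      ∏ ℓ ∈ univ.erase j, (u ℓ / (u j - u ℓ)) = 1 := by
  classical
  set f : ℂ[X] := ∏ ℓ ∈ univ.erase i, (C (u ℓ) * X - 1) with hf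
  have hfac : ∀ ℓ : Fin r, (C (u ℓ) * X - 1 : ℂ[X]).degree ≤ 1 := by
    intro ℓ
    refine le_trans (degree_sub_le _ _) (max_le ?_ (by simp))
    refine le_trans (degree_mul_le _ _) ?_
    simpa using add_le_add degree_C_le (le_of_eq (degree_X (R := ℂ)))
  have hdeg : f.degree < ((univ : Finset (Fin r)).card : ℕ) := by
    refine lt_of_le_of_lt (degree_prod_le _ _) ?_
    calc ∑ ℓ ∈ univ.erase i, (C (u ℓ) * X - 1 : ℂ[X]).degree
        ≤ ∑ ℓ ∈ univ.erase i, (1 : WithBot ℕ) :=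
          Finset.sum_le_sum fun ℓ _ => hfac ℓ
      _ = ((univ.erase i).card : ℕ) := by
          rw [Finset.sum_const, nsmul_eq_mul, mul_one]
      _ < ((univ : Finset (Fin r)).card : ℕ) := by
          rw [card_erase_of_mem (mem_univ i)]
          exact_mod_cast Nat.sub_lt (by simpa [Fin.pos_iff_nonempty] using ⟨i⟩) one_pos
  have key := Lagrange.eq_interpolate (s := univ) (v := u) hinj.injOn hdeg
  have heq := congrArg (Polynomial.eval 0) key
  rw [Lagrange.interpolate_apply, eval_finset_sum] at heq
  have hf0 : f.eval 0 = (-1 : ℂ) ^ (r - 1) := by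
    rw [hf, eval_prod]
    simp [card_erase_of_mem]
  have hbasis : ∀ j : Fin r, Polynomial.eval 0 (C (f.eval (u j)) * Lagrange.basis univ u j)
      = (-1 : ℂ) ^ (r - 1) * ((∏ ℓ ∈ univ.erase i, (u ℓ * u j - 1)) *
        ∏ ℓ ∈ univ.erase j, (u ℓ / (u j - u ℓ))) := by
    intro j
    rw [eval_mul, eval_C, mul_left_comm]
    congr 1
    · simp only [hf, eval_prod, eval_sub, eval_mul, eval_C, eval_X, eval_one, mul_comm]
    · rw [Lagrange.basis, eval_prod]
      have h2 : ∀ ℓ ∈ univ.erase j, Polynomial.eval 0 (Lagrange.basisDivisor (u j) (u ℓ))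
          = (-1) * (u ℓ / (u j - u ℓ)) := by
        intro ℓ _
        simp [Lagrange.basisDivisor, div_eq_inv_mul]
      rw [Finset.prod_congr rfl h2, Finset.prod_mul_distrib, Finset.prod_const,
        card_erase_of_mem (mem_univ j)]
      simp [card_univ]
  rw [Finset.sum_congr rfl (fun j _ => hbasis j), hf0, ← Finset.mul_sum] at heq
  have hne : ((-1 : ℂ) ^ (r - 1)) ≠ 0 := by simp
  exact mul_left_cancel₀ hne (by rw [mul_one]; exact heq.symm)
end

section
/- Let $r$ be an odd positive integer and let $u_1,\dots,u_r$ be distinct nonzero complex numbers with $u_i u_j \neq 1$ and $u_i^2 \neq 1$ for all $i,j$. Then for every $i$ with $1 \le i \le r$, $\sum_{j=1}^r \frac{1-u_i^2}{1-u_i u_j} \prod_{\ell \neq j} \frac{u_\ell u_j - 1}{u_j - u_\ell} = 1$. -/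
open Finset
open Polynomial

/-- For `r` odd and distinct nonzero complex numbers `u₁, …, u_r` with `uᵢ uⱼ ≠ 1`
and `uᵢ² ≠ 1`, one has, for every `i`,
`∑ⱼ (1 − uᵢ²)/(1 − uᵢ uⱼ) ∏_{ℓ ≠ j} (u_ℓ u_j − 1)/(u_j − u_ℓ) = 1`. -/
theorem stmt2 {r : ℕ} (hr : Odd r) (u : Fin r → ℂ) (hinj : Function.Injective u)
    (h0 : ∀ i, u i ≠ 0) (h1 : ∀ i j, u i * u j ≠ 1) (hsq : ∀ i, u i ^ 2 ≠ 1)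
    (i : Fin r) :
    ∑ j, (1 - u i ^ 2) / (1 - u i * u j) *
      ∏ ℓ ∈ univ.erase j, ((u ℓ * u j - 1) / (u j - u ℓ)) = 1 := by
  classical
  have hrpos : 1 ≤ r := hr.pos
  set γ : Fin r → ℂ := fun j => ∏ ℓ ∈ univ.erase j, ((u ℓ * u j - 1) / (u j - u ℓ)) with hγdef
  have hsub : ∀ j ℓ : Fin r, ℓ ≠ j → u j - u ℓ ≠ 0 := fun j ℓ h =>
    sub_ne_zero.mpr fun e => h (hinj e.symm)
  have hγ_mul : ∀ k, γ k * ∏ ℓ ∈ univ.erase k, (u k - u ℓ) =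
      ∏ ℓ ∈ univ.erase k, (u ℓ * u k - 1) := by
    intro k
    rw [hγdef, ← prod_mul_distrib]
    refine prod_congr rfl fun ℓ hℓ => ?_
    exact div_mul_cancel₀ _ (hsub k ℓ (Finset.ne_of_mem_erase hℓ))
  -- the polynomial
  set P : ℂ[X] := (∏ ℓ, (C (u ℓ) * X - 1)) + X * ∏ ℓ, (X - C (u ℓ))
      - ∑ j, C (γ j) * ((X ^ 2 - 1) * ∏ ℓ ∈ univ.erase j, (X - C (u ℓ))) with hP
  have hdeg : P.natDegree ≤ r + 1 := by
    refine (natDegree_sub_le _ _).trans (max_le ((natDegree_add_le _ _).trans (max_le ?_ ?_)) ?_)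
    · refine ((natDegree_prod_le _ _).trans ?_).trans (Nat.le_succ r)
      refine (Finset.sum_le_card_nsmul _ _ 1 fun ℓ _ => ?_).trans (by simp)
      exact (natDegree_sub_le _ _).trans
        (max_le ((natDegree_C_mul_le _ _).trans_eq natDegree_X) (by simp))
    · refine (natDegree_mul_le).trans ?_
      have : (∏ ℓ, (X - C (u ℓ)) : ℂ[X]).natDegree ≤ r := by
        refine (natDegree_prod_le _ _).trans ?_
        refine (Finset.sum_le_card_nsmul _ _ 1 fun ℓ _ => ?_).trans (by simp)
        exact (natDegree_sub_le _ _).trans (by simp)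
      simp only [natDegree_X]
      omega
    · refine (natDegree_sum_le _ _).trans ?_
      rw [Finset.fold_max_le]
      refine ⟨by omega, fun j _ => ?_⟩
      refine (natDegree_mul_le).trans ?_
      have h2 : ((X ^ 2 - 1 : ℂ[X])).natDegree ≤ 2 :=
        (natDegree_sub_le _ _).trans (by simp [natDegree_X_pow])
      have h3 : (∏ ℓ ∈ univ.erase j, (X - C (u ℓ)) : ℂ[X]).natDegree ≤ r - 1 := by
        refine (natDegree_prod_le _ _).trans ?_
        refine (Finset.sum_le_card_nsmul _ _ 1 fun ℓ _ => ?_).trans ?_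
        · exact (natDegree_sub_le _ _).trans (by simp)
        · simp [Finset.card_erase_of_mem]
      have := (natDegree_mul_le (p := (X ^ 2 - 1 : ℂ[X]))
        (q := ∏ ℓ ∈ univ.erase j, (X - C (u ℓ)))).trans (Nat.add_le_add h2 h3)
      simp only [natDegree_C, zero_add]
      omega
  have heval_u : ∀ k, P.eval (u k) = 0 := by
    intro k
    simp only [hP, eval_sub, eval_add, eval_mul, eval_prod, eval_finset_sum, eval_pow,
      eval_X, eval_C, eval_one]
    have hxg : (∏ ℓ, (u k - u ℓ)) = 0 :=
      prod_eq_zero (mem_univ k) (sub_self _)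
    have hsum : ∑ j, γ j * ((u k ^ 2 - 1) * ∏ ℓ ∈ univ.erase j, (u k - u ℓ)) =
        γ k * ((u k ^ 2 - 1) * ∏ ℓ ∈ univ.erase k, (u k - u ℓ)) := by
      refine Finset.sum_eq_single k (fun j _ hj => ?_) (by simp)
      have : (∏ ℓ ∈ univ.erase j, (u k - u ℓ)) = 0 :=
        prod_eq_zero (Finset.mem_erase.mpr ⟨Ne.symm hj, mem_univ k⟩) (sub_self _)
      simp [this]
    rw [hxg, hsum]
    have : γ k * ((u k ^ 2 - 1) * ∏ ℓ ∈ univ.erase k, (u k - u ℓ)) =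
        (u k ^ 2 - 1) * ∏ ℓ ∈ univ.erase k, (u ℓ * u k - 1) := by
      rw [← hγ_mul k]; ring
    rw [this]
    have : (u k ^ 2 - 1) * ∏ ℓ ∈ univ.erase k, (u ℓ * u k - 1) =
        ∏ ℓ, (u ℓ * u k - 1) := by
      rw [← Finset.mul_prod_erase univ _ (mem_univ k), ← sq]
    rw [this]; ring
  have hprodneg : ∀ v : ℂ, (∏ ℓ, (u ℓ * v - 1)) = (-1) ^ r * ∏ ℓ, (1 - u ℓ * v) := by
    intro v
    rw [show ((-1 : ℂ) ^ r) = ∏ _ℓ : Fin r, (-1 : ℂ) by simp, ← prod_mul_distrib]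
    exact prod_congr rfl fun ℓ _ => by ring
  have hneg1 : ((-1 : ℂ)) ^ r = -1 := hr.neg_one_pow
  have heval_1 : P.eval 1 = 0 := by
    simp only [hP, eval_sub, eval_add, eval_mul, eval_prod, eval_finset_sum, eval_pow,
      eval_X, eval_C, eval_one]
    have h1' : (∏ ℓ, (u ℓ * 1 - 1)) = (-1) ^ r * ∏ ℓ, (1 - u ℓ * 1) := hprodneg 1
    simp only [mul_one] at h1' ⊢
    rw [h1', hneg1]
    simp
  have heval_neg1 : P.eval (-1) = 0 := by
    simp only [hP, eval_sub, eval_add, eval_mul, eval_prod, eval_finset_sum, eval_pow,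
      eval_X, eval_C, eval_one]
    have h1' : (∏ ℓ, (u ℓ * (-1) - 1)) = (-1) ^ r * ∏ ℓ, (1 - u ℓ * (-1)) := hprodneg (-1)
    have h2' : (∏ ℓ, ((-1 : ℂ) - u ℓ)) = (-1) ^ r * ∏ ℓ, (1 - u ℓ * (-1)) := by
      rw [show ((-1 : ℂ) ^ r) = ∏ _ℓ : Fin r, (-1 : ℂ) by simp, ← prod_mul_distrib]
      exact prod_congr rfl fun ℓ _ => by ring
    rw [h1', h2', hneg1]
    ring_nf
    simp
  -- the r+2 roots
  have hu1 : ∀ ℓ, u ℓ ≠ 1 := fun ℓ h => hsq ℓ (by rw [h]; norm_num)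
  have hun1 : ∀ ℓ, u ℓ ≠ -1 := fun ℓ h => hsq ℓ (by rw [h]; norm_num)
  have hP0 : P = 0 := by
    set s : Finset ℂ := insert 1 (insert (-1) (univ.image u)) with hs
    have hcard : s.card = r + 2 := by
      rw [hs, Finset.card_insert_of_notMem, Finset.card_insert_of_notMem,
        Finset.card_image_of_injective _ hinj, Finset.card_univ, Fintype.card_fin]
      · simp only [Finset.mem_image, not_exists]
        rintro ℓ ⟨_, h⟩
        exact hun1 ℓ h
      · simp only [Finset.mem_insert, Finset.mem_image]
        push_neg
        exact ⟨by norm_num, fun ℓ _ => hu1 ℓ⟩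
    refine P.eq_zero_of_natDegree_lt_card_of_eval_eq_zero' s ?_ ?_
    · intro x hx
      rw [hs] at hx
      simp only [Finset.mem_insert, Finset.mem_image] at hx
      rcases hx with rfl | rfl | ⟨k, _, rfl⟩
      · exact heval_1
      · exact heval_neg1
      · exact heval_u k
    · omega
  -- evaluate at (u i)⁻¹
  set v : ℂ := (u i)⁻¹ with hv
  have hkey : P.eval v = 0 := by rw [hP0]; simp
  have hfv : (∏ ℓ, (u ℓ * v - 1)) = 0 :=
    prod_eq_zero (mem_univ i) (by rw [hv, mul_inv_cancel₀ (h0 i), sub_self])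
  have hmain : ∑ j, γ j * ((v ^ 2 - 1) * ∏ ℓ ∈ univ.erase j, (v - u ℓ)) =
      v * ∏ ℓ, (v - u ℓ) := by
    have := hkey
    simp only [hP, eval_sub, eval_add, eval_mul, eval_prod, eval_finset_sum, eval_pow,
      eval_X, eval_C, eval_one] at this
    rw [hfv] at this
    linear_combination -this
  -- nonvanishing facts
  have h1m : ∀ j, (1 : ℂ) - u i * u j ≠ 0 := fun j => sub_ne_zero.mpr (Ne.symm (h1 i j))
  have hDfull : (∏ ℓ, (1 - u i * u ℓ)) ≠ 0 := prod_ne_zero_iff.mpr fun ℓ _ => h1m ℓ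
  have hvu : ∀ ℓ, v - u ℓ = (1 - u i * u ℓ) * v := by
    intro ℓ
    rw [hv]
    field_simp [h0 i]
  have hQ : ∀ j : Fin r, (∏ ℓ ∈ univ.erase j, (v - u ℓ)) =
      (∏ ℓ ∈ univ.erase j, (1 - u i * u ℓ)) * v ^ (r - 1) := by
    intro j
    calc (∏ ℓ ∈ univ.erase j, (v - u ℓ))
        = ∏ ℓ ∈ univ.erase j, ((1 - u i * u ℓ) * v) := prod_congr rfl fun ℓ _ => hvu ℓ
      _ = (∏ ℓ ∈ univ.erase j, (1 - u i * u ℓ)) * v ^ (r - 1) := by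
          rw [prod_mul_distrib, prod_const, Finset.card_erase_of_mem (mem_univ j),
            Finset.card_univ, Fintype.card_fin]
  have hB : (∏ ℓ, (v - u ℓ)) = (∏ ℓ, (1 - u i * u ℓ)) * v ^ r := by
    calc (∏ ℓ, (v - u ℓ)) = ∏ ℓ, ((1 - u i * u ℓ) * v) := prod_congr rfl fun ℓ _ => hvu ℓ
      _ = (∏ ℓ, (1 - u i * u ℓ)) * v ^ r := by
          rw [prod_mul_distrib, prod_const, Finset.card_univ, Fintype.card_fin]
  -- powers
  have hvpow : v ^ (r - 1) * u i ^ (r + 1) = u i ^ 2 := by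
    rw [hv, inv_pow, show r + 1 = (r - 1) + 2 by omega, pow_add, ← mul_assoc,
      inv_mul_cancel₀ (pow_ne_zero _ (h0 i)), one_mul]
  have hvpow2 : v ^ 2 * u i ^ 2 = 1 := by
    rw [hv, inv_pow, inv_mul_cancel₀ (pow_ne_zero _ (h0 i))]
  have hvpowr : v ^ r * u i ^ r = 1 := by
    rw [hv, inv_pow, inv_mul_cancel₀ (pow_ne_zero _ (h0 i))]
  set c : ℂ := u i ^ (r + 1) / ∏ ℓ, (1 - u i * u ℓ) with hc
  have hterm : ∀ j : Fin r, (1 - u i ^ 2) / (1 - u i * u j) * γ j =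
      γ j * ((v ^ 2 - 1) * ∏ ℓ ∈ univ.erase j, (v - u ℓ)) * c := by
    intro j
    rw [hQ j, hc]
    have hDj : (∏ ℓ ∈ univ.erase j, (1 - u i * u ℓ)) ≠ 0 :=
      prod_ne_zero_iff.mpr fun ℓ _ => h1m ℓ
    have hfull : (∏ ℓ, (1 - u i * u ℓ)) =
        (1 - u i * u j) * ∏ ℓ ∈ univ.erase j, (1 - u i * u ℓ) :=
      (Finset.mul_prod_erase univ _ (mem_univ j)).symm
    rw [hfull]
    have expand : γ j * ((v ^ 2 - 1) * ((∏ ℓ ∈ univ.erase j, (1 - u i * u ℓ)) * v ^ (r - 1)))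
        * (u i ^ (r + 1) / ((1 - u i * u j) * ∏ ℓ ∈ univ.erase j, (1 - u i * u ℓ))) =
        γ j * ((v ^ 2 - 1) * (v ^ (r - 1) * u i ^ (r + 1))) / (1 - u i * u j) := by
      rw [← mul_div_assoc,
        show γ j * ((v ^ 2 - 1) * ((∏ ℓ ∈ univ.erase j, (1 - u i * u ℓ)) * v ^ (r - 1))) *
          u i ^ (r + 1) = γ j * ((v ^ 2 - 1) * (v ^ (r - 1) * u i ^ (r + 1))) *
          ∏ ℓ ∈ univ.erase j, (1 - u i * u ℓ) from by ring,
        mul_div_mul_right _ _ hDj]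
    rw [expand, hvpow]
    have : (v ^ 2 - 1) * u i ^ 2 = 1 - u i ^ 2 := by
      rw [sub_mul, hvpow2, one_mul]
    rw [this]
    ring
  calc ∑ j, (1 - u i ^ 2) / (1 - u i * u j) *
        ∏ ℓ ∈ univ.erase j, ((u ℓ * u j - 1) / (u j - u ℓ))
      = ∑ j, γ j * ((v ^ 2 - 1) * ∏ ℓ ∈ univ.erase j, (v - u ℓ)) * c :=
        Finset.sum_congr rfl fun j _ => hterm j
    _ = (∑ j, γ j * ((v ^ 2 - 1) * ∏ ℓ ∈ univ.erase j, (v - u ℓ))) * c := by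
        rw [Finset.sum_mul]
    _ = v * (∏ ℓ, (v - u ℓ)) * c := by rw [hmain]
    _ = 1 := by
        rw [hB, hc]
        have : v * ((∏ ℓ, (1 - u i * u ℓ)) * v ^ r) *
            (u i ^ (r + 1) / ∏ ℓ, (1 - u i * u ℓ)) =
            v ^ (r + 1) * u i ^ (r + 1) := by
          field_simp
          ring
        rw [this, ← mul_pow, hv, inv_mul_cancel₀ (h0 i), one_pow]
end

section
/- Let $r$ be an even positive integer and let $u_1,\dots,u_r$ be distinct nonzero complex numbers with $u_i u_j \neq 1$ and $u_i^2 \neq 1$ for all $i,j$. Then for every $i$ with $1 \le i \le r$, $\sum_{j=1}^r \frac{1-u_i^2}{1-u_i u_j} (-u_j) \prod_{\ell \neq j} \frac{u_\ell u_j - 1}{u_j - u_\ell} = 1$. -/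
/-!
Write `γ j = cauchyWeight u j` and `F x = ∑ j, γ j (1 - x²) / (1 - u j x)`. Clearing
denominators, `P = ∏ k, (1 - u k X) (F - 1) + ∏ k, (X - u k)` (this is `cauchyDefect u`) is a
polynomial of degree at most `r + 1`. It vanishes at `1`, at `-1` (because `r` is even) and at
every `1 / u k`, where only two terms survive and the choice of `γ k` makes them cancel. These
are `r + 2` distinct points, so `P = 0`, and evaluating at `u i`, a root of `∏ k, (X - u k)`,
gives `F (u i) = 1`.
-/

open Finset Polynomial

noncomputable section

variable {K ι : Type*} [Field K]

def reversedNodal (s : Finset ι) (v : ι → K) : K[X] := ∏ i ∈ s, (1 - C (v i) * X)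

theorem eval_reversedNodal (s : Finset ι) (v : ι → K) (x : K) :
    (reversedNodal s v).eval x = ∏ i ∈ s, (1 - v i * x) := by
  simp [reversedNodal, eval_prod]

theorem natDegree_reversedNodal_le (s : Finset ι) (v : ι → K) :
    (reversedNodal s v).natDegree ≤ #s := by
  refine (natDegree_prod_le _ _).trans <| (sum_le_card_nsmul s _ 1 fun i _ => ?_).trans (by simp)
  compute_degree

variable [Fintype ι] [DecidableEq ι]

def cauchyWeight (u : ι → K) (j : ι) : K :=
  -u j * ∏ ℓ ∈ univ.erase j, (u ℓ * u j - 1) / (u j - u ℓ)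

theorem cauchyWeight_mul_prod {u : ι → K} (hu : Function.Injective u) (j : ι) :
    cauchyWeight u j * ∏ ℓ ∈ univ.erase j, (u j - u ℓ) =
      -u j * ∏ ℓ ∈ univ.erase j, (u ℓ * u j - 1) := by
  have hne : ∏ ℓ ∈ univ.erase j, (u j - u ℓ) ≠ 0 :=
    prod_ne_zero_iff.2 fun ℓ hℓ => sub_ne_zero.2 fun h => (ne_of_mem_erase hℓ) (hu h).symm
  rw [cauchyWeight, prod_div_distrib, mul_assoc, div_mul_cancel₀ _ hne]

def cauchyDefect (u : ι → K) : K[X] :=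
  (1 - X ^ 2) * ∑ j, C (cauchyWeight u j) * reversedNodal (univ.erase j) u
    - reversedNodal univ u + Lagrange.nodal univ u

theorem eval_cauchyDefect (u : ι → K) (x : K) :
    (cauchyDefect u).eval x =
      (1 - x ^ 2) * ∑ j, cauchyWeight u j * ∏ k ∈ univ.erase j, (1 - u k * x)
        - ∏ k, (1 - u k * x) + ∏ k, (x - u k) := by
  simp [cauchyDefect, eval_finsetSum, eval_reversedNodal, Lagrange.eval_nodal]

theorem natDegree_cauchyDefect_lt [Nonempty ι] (u : ι → K) :
    (cauchyDefect u).natDegree < Fintype.card ι + 2 := by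
  set S := ∑ j, C (cauchyWeight u j) * reversedNodal (univ.erase j) u
  have hS : S.natDegree ≤ Fintype.card ι - 1 := by
    refine natDegree_sum_le_of_forall_le _ _ fun j _ => (natDegree_C_mul_le _ _).trans ?_
    simpa using natDegree_reversedNodal_le (univ.erase j) u
  have hsq : (1 - X ^ 2 : K[X]).natDegree ≤ 2 := by compute_degree
  have hrev := natDegree_reversedNodal_le univ u
  have hnodal := (Lagrange.natDegree_nodal (s := univ) (v := u)).le
  have hpos := Fintype.card_pos (α := ι)
  rw [card_univ] at hrev hnodal
  unfold cauchyDefect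
  grind [natDegree_add_le, natDegree_sub_le, natDegree_mul_le]

theorem eval_one_cauchyDefect (u : ι → K) : (cauchyDefect u).eval 1 = 0 := by
  simp [eval_cauchyDefect]

theorem eval_neg_one_cauchyDefect (u : ι → K) (hn : Even (Fintype.card ι)) :
    (cauchyDefect u).eval (-1) = 0 := by
  have : ∏ k, (-1 - u k) = ∏ k, (1 + u k) := by
    simp_rw [show ∀ k, -1 - u k = -(1 + u k) from fun k => by ring]
    rw [prod_neg, card_univ, hn.neg_one_pow, one_mul]
  simp [eval_cauchyDefect, this]

theorem eval_cauchyDefect_eq_zero_of_mul_eq_one {u : ι → K} (hu : Function.Injective u)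
    (hn : Even (Fintype.card ι)) {k : ι} {y : K} (hy : u k * y = 1) :
    (cauchyDefect u).eval y = 0 := by
  have hfactor : 1 - u k * y = 0 := by rw [hy, sub_self]
  have hsum : ∑ j, cauchyWeight u j * ∏ m ∈ univ.erase j, (1 - u m * y) =
      cauchyWeight u k * ∏ m ∈ univ.erase k, (1 - u m * y) :=
    sum_eq_single k (fun j _ hj => by
      rw [prod_eq_zero (mem_erase.2 ⟨Ne.symm hj, mem_univ k⟩) hfactor, mul_zero])
      (fun h => absurd (mem_univ k) h)
  set e := #(univ.erase k)
  have he : Odd e := by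
    rw [← Nat.not_even_iff_odd, ← Nat.even_add_one, card_erase_add_one (mem_univ k)]
    exact hn
  have hrev : ∏ m ∈ univ.erase k, (1 - u m * y) =
      y ^ e * ∏ m ∈ univ.erase k, (u k - u m) := by
    rw [← prod_const, ← prod_mul_distrib]
    exact prod_congr rfl fun m _ => by linear_combination -hy
  have hnodal : ∏ m ∈ univ.erase k, (y - u m) =
      (-y) ^ e * ∏ m ∈ univ.erase k, (u m * u k - 1) := by
    rw [← prod_const, ← prod_mul_distrib]
    exact prod_congr rfl fun m _ => by linear_combination u m * hy
  rw [eval_cauchyDefect, hsum, prod_eq_zero (mem_univ k) hfactor,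
    ← mul_prod_erase univ (fun m => y - u m) (mem_univ k), hrev, hnodal, he.neg_pow]
  linear_combination (1 - y ^ 2) * y ^ e * cauchyWeight_mul_prod hu k
    + y ^ (e + 1) * (∏ m ∈ univ.erase k, (u m * u k - 1)) * hy

theorem cauchyDefect_eq_zero [NeZero (2 : K)] [Nonempty ι] {u : ι → K}
    (hu : Function.Injective u) (h0 : ∀ k, u k ≠ 0) (hsq : ∀ k, u k ^ 2 ≠ 1)
    (hn : Even (Fintype.card ι)) :
    cauchyDefect u = 0 := by
  have hsigns : Function.Injective ![(1 : K), -1] := by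
    have : (1 : K) ≠ -1 := fun h =>
      two_ne_zero (one_add_one_eq_two.symm.trans (eq_neg_iff_add_eq_zero.1 h))
    intro a b h
    fin_cases a <;> fin_cases b <;> simp_all [eq_comm]
  have hinv (k : ι) (x : K) (hx : x ∈ Set.range ![(1 : K), -1]) : (u k)⁻¹ ≠ x := by
    rintro rfl
    apply hsq k
    simp_all [inv_eq_iff_eq_inv]
  refine eq_zero_of_natDegree_lt_card_of_eval_eq_zero _
    ((inv_injective.comp hu).sumElim hsigns fun k b => hinv k _ ⟨b, rfl⟩) ?_ ?_
  · rintro (k | b)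
    · exact eval_cauchyDefect_eq_zero_of_mul_eq_one hu hn (mul_inv_cancel₀ (h0 k))
    · fin_cases b
      · exact eval_one_cauchyDefect u
      · exact eval_neg_one_cauchyDefect u hn
  · simpa using natDegree_cauchyDefect_lt u

theorem sum_div_one_sub_mul_cauchyWeight_eq_one [NeZero (2 : K)] {u : ι → K}
    (hu : Function.Injective u) (h0 : ∀ k, u k ≠ 0) (h1 : ∀ i j, u i * u j ≠ 1)
    (hn : Even (Fintype.card ι)) (i : ι) :
    ∑ j, (1 - u i ^ 2) / (1 - u i * u j) * cauchyWeight u j = 1 := by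
  have : Nonempty ι := ⟨i⟩
  have hP := congrArg (eval (u i))
    (cauchyDefect_eq_zero hu h0 (fun k => by rw [sq]; exact h1 k k) hn)
  rw [eval_cauchyDefect, prod_eq_zero (f := fun k => u i - u k) (mem_univ i) (sub_self _),
    add_zero, eval_zero, sub_eq_zero] at hP
  have hD : ∏ k, (1 - u k * u i) ≠ 0 :=
    prod_ne_zero_iff.2 fun k _ => sub_ne_zero.2 (h1 k i).symm
  calc ∑ j, (1 - u i ^ 2) / (1 - u i * u j) * cauchyWeight u j
      = ∑ j, (1 - u i ^ 2) * (cauchyWeight u j * ∏ k ∈ univ.erase j, (1 - u k * u i)) /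
          ∏ k, (1 - u k * u i) := sum_congr rfl fun j _ => by
        rw [← mul_prod_erase univ _ (mem_univ j)] at hD ⊢
        rw [← mul_assoc, mul_div_mul_right _ _ (right_ne_zero_of_mul hD), div_mul_eq_mul_div,
          mul_comm (u i) (u j)]
    _ = 1 := by rw [← sum_div, ← mul_sum, hP, div_self hD]

end

theorem stmt3_general {r : ℕ} (hr : Even r) (u : Fin r → ℂ)
    (hinj : Function.Injective u)
    (h0 : ∀ i, u i ≠ 0) (h1 : ∀ i j, u i * u j ≠ 1)
    (i : Fin r) :
    ∑ j, (1 - u i ^ 2) / (1 - u i * u j) * (-u j) *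
      ∏ ℓ ∈ univ.erase j, ((u ℓ * u j - 1) / (u j - u ℓ)) = 1 := by
  have hn : Even (Fintype.card (Fin r)) := by rwa [Fintype.card_fin]
  simpa only [cauchyWeight, mul_assoc] using
    sum_div_one_sub_mul_cauchyWeight_eq_one hinj h0 h1 hn i

/-- For `r` even and positive, and distinct nonzero complex numbers `u₁, …, u_r` with
`uᵢ uⱼ ≠ 1` and `uᵢ² ≠ 1`, one has, for every `i`,
`∑ⱼ (1 − uᵢ²)/(1 − uᵢ uⱼ) (−uⱼ) ∏_{ℓ ≠ j} (u_ℓ u_j − 1)/(u_j − u_ℓ) = 1`. -/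
theorem stmt3 {r : ℕ} (hr : Even r) (hpos : 0 < r) (u : Fin r → ℂ)
    (hinj : Function.Injective u)
    (h0 : ∀ i, u i ≠ 0) (h1 : ∀ i j, u i * u j ≠ 1) (hsq : ∀ i, u i ^ 2 ≠ 1)
    (i : Fin r) :
    ∑ j, (1 - u i ^ 2) / (1 - u i * u j) * (-u j) *
      ∏ ℓ ∈ univ.erase j, ((u ℓ * u j - 1) / (u j - u ℓ)) = 1 :=
  stmt3_general hr u hinj h0 h1 i
end

section
/- Let $F$ be a field, let $u_1,\dots,u_r$ be distinct nonzero elements of $F$ with $u_i u_j \neq 1$ and $u_i^2 \neq 1$ for all $i,j$, and let $\rho, q \in F$ be nonzero with $q^2 \neq 1$. Then the unique solution of the linear system $\sum_{j=1}^r \gamma_j/(1 - u_i u_j) = 1/(1-u_i^2) + 1/(\rho(q^{-1}-q))$ for $1 \le i \le r$ is given by $\gamma_j = \prod_{\ell \neq j} \frac{u_\ell u_j - 1}{u_j - u_\ell} \left( \frac{1-u_j^2}{\rho(q^{-1}-q)} \prod_{\ell \neq j} u_\ell + c_j \right)$, where $c_j = 1$ if $r$ is odd and $c_j = -u_j$ if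 $r$ is even. -/
open Finset Polynomial

/-!
Clearing denominators, `∑ⱼ γⱼ / (1 - t uⱼ) · ∏ℓ (1 - t u_ℓ) = N(t)` with
`N = ∑ₖ γₖ ∏_{ℓ ≠ k} (1 - X u_ℓ)` of degree `< r`, and `N(1/uⱼ)` isolates `γⱼ`. So the system
fixes `N` at the `r` points `uᵢ`, which gives uniqueness, and a candidate `γ` is a solution as soon
as some `M` of degree `< r` has the values of `N` at the points `1/uⱼ` and the values prescribed by
the system at the points `uᵢ`. The right-hand side is affine in `c = 1/(ρ(q⁻¹ - q))`. For the
coefficient of `c` take `M = ∏ (1 - X u_ℓ) - ∏ u_ℓ (u_ℓ - X)`, of degree `< r` because the leading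
terms cancel. For the constant term take `M = (L · ∏ (u_ℓ - X) - ∏ (1 - X u_ℓ)) / (X² - 1)` with
`L = -X` for odd `r` and `L = 1` for even `r`; the division is exact because
`1 - X u ≡ -X (u - X)` modulo `X² - 1`.
-/

namespace Polynomial

variable {R ι : Type*} [CommRing R] {s : Finset ι}

lemma natDegree_prod_le_card {f : ι → R[X]} (hf : ∀ ℓ ∈ s, (f ℓ).natDegree ≤ 1) :
    (∏ ℓ ∈ s, f ℓ).natDegree ≤ #s :=
  (natDegree_prod_le _ _).trans (by simpa using sum_le_card_nsmul s _ 1 hf)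

lemma natDegree_prod_sub_prod_lt (hs : s.Nonempty) {f g : ι → R[X]}
    (hf : ∀ ℓ ∈ s, (f ℓ).natDegree ≤ 1) (hg : ∀ ℓ ∈ s, (g ℓ).natDegree ≤ 1)
    (hfg : ∀ ℓ ∈ s, (f ℓ).coeff 1 = (g ℓ).coeff 1) :
    (∏ ℓ ∈ s, f ℓ - ∏ ℓ ∈ s, g ℓ).natDegree < #s := by
  have hle : (∏ ℓ ∈ s, f ℓ - ∏ ℓ ∈ s, g ℓ).natDegree ≤ #s :=
    (natDegree_sub_le _ _).trans (max_le (natDegree_prod_le_card hf) (natDegree_prod_le_card hg))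
  have htop : (∏ ℓ ∈ s, f ℓ - ∏ ℓ ∈ s, g ℓ).coeff #s = 0 := by
    have hf' := coeff_prod_of_natDegree_le s f 1 hf
    have hg' := coeff_prod_of_natDegree_le s g 1 hg
    rw [mul_one] at hf' hg'
    rw [coeff_sub, hf', hg', prod_congr rfl hfg, sub_self]
  have := natDegree_le_pred hle htop
  have := hs.card_pos
  omega

lemma X_sq_sub_one_dvd_ite_mul_prod_sub_prod (s : Finset ι) (a : ι → R) :
    (X ^ 2 - 1 : R[X]) ∣
      (if Odd #s then -X else 1) * ∏ ℓ ∈ s, (C (a ℓ) - X) - ∏ ℓ ∈ s, (1 - X * C (a ℓ)) := by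
  -- a fresh name for the root, so that rewriting powers cannot reach the `X ^ 2` in its type
  obtain ⟨ω, hω_def⟩ : ∃ ω, AdjoinRoot.root (X ^ 2 - 1 : R[X]) = ω := ⟨_, rfl⟩
  have hω : ω ^ 2 = 1 := by
    have := AdjoinRoot.mk_self (f := (X ^ 2 - 1 : R[X]))
    rwa [map_sub, map_pow, AdjoinRoot.mk_X, map_one, hω_def, sub_eq_zero] at this
  have hneg : (-ω) ^ #s = if Odd #s then -ω else 1 := by
    rcases Nat.even_or_odd' #s with ⟨k, hk | hk⟩
    · rw [hk, pow_mul, neg_sq, hω, one_pow, if_neg (by simp)]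
    · rw [hk, pow_succ (-ω), pow_mul, neg_sq, hω, one_pow, one_mul, if_pos (by simp)]
  rw [← AdjoinRoot.mk_eq_zero, map_sub, map_mul, map_prod, map_prod, sub_eq_zero]
  have hfac : ∀ ℓ ∈ s, AdjoinRoot.mk (X ^ 2 - 1) (1 - X * C (a ℓ))
      = -ω * AdjoinRoot.mk (X ^ 2 - 1) (C (a ℓ) - X) := by
    intro ℓ _
    simp only [map_sub, map_mul, map_one, AdjoinRoot.mk_X, hω_def]
    linear_combination -hω
  rw [prod_congr rfl hfac, prod_mul_distrib, prod_const, hneg]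
  split_ifs <;> simp [hω_def]

lemma exists_natDegree_lt_and_eq_X_sq_sub_one_mul [Nontrivial R] (hs : s.Nonempty) (a : ι → R) :
    ∃ K : R[X], K.natDegree < #s ∧
      (if Odd #s then -X else 1) * ∏ ℓ ∈ s, (C (a ℓ) - X) - ∏ ℓ ∈ s, (1 - X * C (a ℓ))
        = (X ^ 2 - 1) * K := by
  obtain ⟨K, hK⟩ := X_sq_sub_one_dvd_ite_mul_prod_sub_prod s a
  refine ⟨K, ?_, hK⟩
  have hL : (if Odd #s then -X else 1 : R[X]).natDegree ≤ 1 := by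
    split_ifs <;> compute_degree!
  have hf : ((if Odd #s then -X else 1) * ∏ ℓ ∈ s, (C (a ℓ) - X)
      - ∏ ℓ ∈ s, (1 - X * C (a ℓ))).natDegree ≤ #s + 1 := by
    have h₁ := natDegree_prod_le_card (s := s) fun ℓ _ => (by compute_degree :
      (C (a ℓ) - X).natDegree ≤ 1)
    have h₂ := natDegree_prod_le_card (s := s) fun ℓ _ => (by compute_degree :
      (1 - X * C (a ℓ)).natDegree ≤ 1)
    refine (natDegree_sub_le _ _).trans (max_le (natDegree_mul_le.trans ?_) ?_) <;> omega
  have := hs.card_pos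
  by_cases hK0 : K = 0
  · rw [hK0, natDegree_zero]
    exact this
  · rw [hK, (by monicity! : (X ^ 2 - 1 : R[X]).Monic).natDegree_mul' hK0,
      (by compute_degree! : (X ^ 2 - 1 : R[X]).natDegree = 2)] at hf
    omega

end Polynomial

section Cauchy

variable {F ι : Type*} [Field F] [Fintype ι] [DecidableEq ι] {u : ι → F}

variable (u) in
noncomputable def cauchyNumerator (γ : ι → F) : F[X] :=
  ∑ k, C (γ k) * ∏ ℓ ∈ univ.erase k, (1 - X * C (u ℓ))

lemma natDegree_cauchyNumerator_lt [Nonempty ι] (γ : ι → F) :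
    (cauchyNumerator u γ).natDegree < Fintype.card ι := by
  have hterm : ∀ k, (C (γ k) * ∏ ℓ ∈ univ.erase k, (1 - X * C (u ℓ))).natDegree
      ≤ Fintype.card ι - 1 := fun k => by
    refine natDegree_C_mul_le _ _ |>.trans ?_
    simpa using natDegree_prod_le_card (s := univ.erase k) fun _ _ => by compute_degree
  have := Fintype.card_pos (α := ι)
  exact (natDegree_sum_le_of_forall_le _ _ fun k _ => hterm k).trans_lt (by omega)

lemma eval_cauchyNumerator (γ : ι → F) {t : F} (ht : ∀ j, 1 - t * u j ≠ 0) :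
    (cauchyNumerator u γ).eval t = (∑ j, γ j / (1 - t * u j)) * ∏ ℓ, (1 - t * u ℓ) := by
  simp only [cauchyNumerator, eval_finsetSum, eval_mul, eval_C, eval_prod, eval_sub, eval_one,
    eval_X, sum_mul]
  refine sum_congr rfl fun j _ => ?_
  rw [← mul_prod_erase univ _ (mem_univ j), ← mul_assoc, div_mul_cancel₀ _ (ht j)]

lemma eval_inv_cauchyNumerator (γ : ι → F) {j : ι} (hj : u j ≠ 0) :
    (cauchyNumerator u γ).eval (u j)⁻¹ * u j ^ (Fintype.card ι - 1)
      = γ j * ∏ ℓ ∈ univ.erase j, (u j - u ℓ) := by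
  simp only [cauchyNumerator, eval_finsetSum, eval_mul, eval_C, eval_prod, eval_sub, eval_one,
    eval_X]
  rw [sum_eq_single j (fun k _ hk => ?_) (by simp), mul_assoc, ← card_univ,
    ← card_erase_of_mem (mem_univ j), prod_mul_pow_card]
  · congr 1
    refine prod_congr rfl fun ℓ _ => by field_simp
  · exact mul_eq_zero_of_right _ (prod_eq_zero (mem_erase.2 ⟨Ne.symm hk, mem_univ j⟩)
      (by rw [inv_mul_cancel₀ hj, sub_self]))

lemma prod_erase_sub_ne_zero (hinj : Function.Injective u) (j : ι) :
    ∏ ℓ ∈ univ.erase j, (u j - u ℓ) ≠ 0 :=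
  prod_ne_zero_iff.2 fun _ hℓ => sub_ne_zero.2 fun h => (mem_erase.1 hℓ).1 (hinj h).symm

lemma eq_of_sum_div_one_sub_mul_eq (hinj : Function.Injective u) (h0 : ∀ i, u i ≠ 0)
    (h1 : ∀ i j, u i * u j ≠ 1) {γ γ' : ι → F}
    (h : ∀ i, ∑ j, γ j / (1 - u i * u j) = ∑ j, γ' j / (1 - u i * u j)) : γ = γ' := by
  funext j
  have : Nonempty ι := ⟨j⟩
  have hN : cauchyNumerator u (γ - γ') = 0 := by
    refine eq_zero_of_natDegree_lt_card_of_eval_eq_zero _ hinj (fun i => ?_)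
      (natDegree_cauchyNumerator_lt _)
    rw [eval_cauchyNumerator _ fun j => sub_ne_zero.2 (h1 i j).symm]
    simp [sub_div, sum_sub_distrib, h i]
  have := eval_inv_cauchyNumerator (γ - γ') (h0 j)
  rw [hN, eval_zero, zero_mul, eq_comm, mul_eq_zero, or_iff_left (prod_erase_sub_ne_zero hinj j),
    Pi.sub_apply, sub_eq_zero] at this
  exact this

lemma sum_div_one_sub_mul_eq_eval_div (hinj : Function.Injective u) (h0 : ∀ i, u i ≠ 0)
    {γ : ι → F} {M : F[X]} (hM : M.natDegree < Fintype.card ι)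
    (hMu : ∀ j, M.eval (u j)⁻¹ * u j ^ (Fintype.card ι - 1) = γ j * ∏ ℓ ∈ univ.erase j, (u j - u ℓ))
    {t : F} (ht : ∀ j, 1 - t * u j ≠ 0) :
    ∑ j, γ j / (1 - t * u j) = M.eval t / ∏ ℓ, (1 - t * u ℓ) := by
  have : Nonempty ι := Fintype.card_pos_iff.1 (by omega)
  have hNM : cauchyNumerator u γ = M := by
    refine eq_of_natDegree_lt_card_of_eval_eq _ _ (inv_injective.comp hinj) (fun j => ?_)
      (max_lt (natDegree_cauchyNumerator_lt γ) hM)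
    refine mul_right_cancel₀ (pow_ne_zero (Fintype.card ι - 1) (h0 j)) ?_
    rw [Function.comp_apply, eval_inv_cauchyNumerator γ (h0 j), hMu]
  rw [eq_div_iff (prod_ne_zero_iff.2 fun ℓ _ => ht ℓ), ← hNM, eval_cauchyNumerator γ ht]

lemma prod_erase_div_mul_prod_erase_sub (hinj : Function.Injective u) (a : ι → F) (j : ι) :
    (∏ ℓ ∈ univ.erase j, a ℓ / (u j - u ℓ)) * ∏ ℓ ∈ univ.erase j, (u j - u ℓ)
      = ∏ ℓ ∈ univ.erase j, a ℓ := by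
  rw [prod_div_distrib, div_mul_cancel₀ _ (prod_erase_sub_ne_zero hinj j)]

lemma prod_erase_sub_inv_mul_pow {j : ι} (hj : u j ≠ 0) :
    (∏ ℓ ∈ univ.erase j, (u ℓ - (u j)⁻¹)) * u j ^ (Fintype.card ι - 1)
      = ∏ ℓ ∈ univ.erase j, (u ℓ * u j - 1) := by
  rw [← card_univ, ← card_erase_of_mem (mem_univ j), prod_mul_pow_card]
  exact prod_congr rfl fun ℓ _ => by field_simp

lemma sum_div_one_sub_mul_eq_one (hinj : Function.Injective u) (h0 : ∀ i, u i ≠ 0)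
    (h1 : ∀ i j, u i * u j ≠ 1) (i : ι) :
    ∑ j, (∏ ℓ ∈ univ.erase j, (u ℓ * u j - 1) / (u j - u ℓ)) *
      ((1 - u j ^ 2) * ∏ ℓ ∈ univ.erase j, u ℓ) / (1 - u i * u j) = 1 := by
  have ht : ∀ j, 1 - u i * u j ≠ 0 := fun j => sub_ne_zero.2 (h1 i j).symm
  have hM : (∏ ℓ, (1 - X * C (u ℓ)) - ∏ ℓ, C (u ℓ) * (C (u ℓ) - X)).natDegree
      < Fintype.card ι := by
    refine natDegree_prod_sub_prod_lt ⟨i, mem_univ i⟩ (fun ℓ _ => by compute_degree)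
      (fun ℓ _ => by compute_degree) (fun ℓ _ => ?_)
    simp [coeff_X, coeff_C, coeff_one]
  rw [sum_div_one_sub_mul_eq_eval_div hinj h0 hM (fun j => ?_) ht]
  · have hvan : ∏ ℓ, u ℓ * (u ℓ - u i) = 0 := prod_eq_zero (mem_univ i) (by rw [sub_self, mul_zero])
    simp only [eval_sub, eval_prod, eval_one, eval_mul, eval_X, eval_C]
    rw [hvan, sub_zero, div_self (prod_ne_zero_iff.2 fun ℓ _ => ht ℓ)]
  · have hux : u j * (u j)⁻¹ = 1 := mul_inv_cancel₀ (h0 j)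
    have hvan : ∏ ℓ, (1 - (u j)⁻¹ * u ℓ) = 0 :=
      prod_eq_zero (mem_univ j) (by rw [inv_mul_cancel₀ (h0 j), sub_self])
    simp only [eval_sub, eval_prod, eval_one, eval_mul, eval_X, eval_C]
    rw [hvan, mul_right_comm, prod_erase_div_mul_prod_erase_sub hinj,
      ← mul_prod_erase univ _ (mem_univ j), prod_mul_distrib]
    linear_combination (-(u j * (u j - (u j)⁻¹)) * ∏ ℓ ∈ univ.erase j, u ℓ) *
        prod_erase_sub_inv_mul_pow (h0 j)
      + ((∏ ℓ ∈ univ.erase j, u ℓ) * ∏ ℓ ∈ univ.erase j, (u ℓ * u j - 1)) * hux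

lemma sum_div_one_sub_mul_eq_one_div (hinj : Function.Injective u) (h0 : ∀ i, u i ≠ 0)
    (h1 : ∀ i j, u i * u j ≠ 1) (hsq : ∀ i, u i ^ 2 ≠ 1) (i : ι) :
    ∑ j, (∏ ℓ ∈ univ.erase j, (u ℓ * u j - 1) / (u j - u ℓ)) *
      (if Odd (Fintype.card ι) then 1 else -u j) / (1 - u i * u j) = 1 / (1 - u i ^ 2) := by
  have ht : ∀ j, 1 - u i * u j ≠ 0 := fun j => sub_ne_zero.2 (h1 i j).symm
  obtain ⟨K, hM, hK⟩ :=
    exists_natDegree_lt_and_eq_X_sq_sub_one_mul (univ_nonempty_iff.2 ⟨i⟩) u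
  rw [card_univ] at hM hK
  rw [sum_div_one_sub_mul_eq_eval_div hinj h0 hM (fun j => ?_) ht]
  · have hvan : ∏ ℓ, (u ℓ - u i) = 0 := prod_eq_zero (mem_univ i) (sub_self _)
    have hKi := congrArg (eval (u i)) hK
    simp only [eval_sub, eval_mul, eval_prod, eval_C, eval_X, eval_one, eval_pow, hvan, mul_zero,
      zero_sub] at hKi
    rw [div_eq_div_iff (prod_ne_zero_iff.2 fun ℓ _ => ht ℓ) (sub_ne_zero.2 (hsq i).symm)]
    linear_combination hKi
  · have hux : u j * (u j)⁻¹ = 1 := mul_inv_cancel₀ (h0 j)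
    have hx2 : (u j)⁻¹ ^ 2 - 1 ≠ 0 := by
      rw [sub_ne_zero, inv_pow, inv_ne_one]
      exact hsq j
    have hvan : ∏ ℓ, (1 - (u j)⁻¹ * u ℓ) = 0 :=
      prod_eq_zero (mem_univ j) (by rw [inv_mul_cancel₀ (h0 j), sub_self])
    have hEU := prod_erase_sub_inv_mul_pow (h0 j)
    have hKx := congrArg (eval (u j)⁻¹) hK
    simp only [eval_sub, eval_mul, eval_prod, eval_C, eval_X, eval_one, eval_pow, hvan,
      sub_zero] at hKx
    rw [← mul_prod_erase univ _ (mem_univ j)] at hKx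
    rw [mul_right_comm, prod_erase_div_mul_prod_erase_sub hinj]
    refine mul_right_cancel₀ hx2 ?_
    split_ifs at hKx ⊢
    · simp only [eval_neg, eval_X] at hKx
      linear_combination (-u j ^ (Fintype.card ι - 1)) * hKx
        + ((u j)⁻¹ ^ 2 - (u j)⁻¹ * u j) * hEU - (∏ ℓ ∈ univ.erase j, (u ℓ * u j - 1)) * hux
    · simp only [eval_one] at hKx
      linear_combination (-u j ^ (Fintype.card ι - 1)) * hKx
        + (u j - (u j)⁻¹) * hEU + ((∏ ℓ ∈ univ.erase j, (u ℓ * u j - 1)) * (u j)⁻¹) * hux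

lemma sum_div_one_sub_mul_eq_one_div_add (hinj : Function.Injective u) (h0 : ∀ i, u i ≠ 0)
    (h1 : ∀ i j, u i * u j ≠ 1) (hsq : ∀ i, u i ^ 2 ≠ 1) (c : F) (i : ι) :
    ∑ j, (∏ ℓ ∈ univ.erase j, (u ℓ * u j - 1) / (u j - u ℓ)) *
        ((1 - u j ^ 2) * c * ∏ ℓ ∈ univ.erase j, u ℓ + if Odd (Fintype.card ι) then 1 else -u j) /
        (1 - u i * u j)
      = 1 / (1 - u i ^ 2) + c := by
  calc _ = ∑ j, ((∏ ℓ ∈ univ.erase j, (u ℓ * u j - 1) / (u j - u ℓ)) *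
          (if Odd (Fintype.card ι) then 1 else -u j) / (1 - u i * u j)
        + c * ((∏ ℓ ∈ univ.erase j, (u ℓ * u j - 1) / (u j - u ℓ)) *
          ((1 - u j ^ 2) * ∏ ℓ ∈ univ.erase j, u ℓ) / (1 - u i * u j))) :=
        sum_congr rfl fun j _ => by ring
    _ = 1 / (1 - u i ^ 2) + c := by
      rw [sum_add_distrib, ← mul_sum, sum_div_one_sub_mul_eq_one_div hinj h0 h1 hsq,
        sum_div_one_sub_mul_eq_one hinj h0 h1, mul_one]

end Cauchy

theorem stmt4_general {F : Type*} [Field F] {r : ℕ} (u : Fin r → F)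
    (hinj : Function.Injective u) (h0 : ∀ i, u i ≠ 0)
    (h1 : ∀ i j, u i * u j ≠ 1) (hsq : ∀ i, u i ^ 2 ≠ 1)
    (ρ q : F)
    (γ : Fin r → F) :
    (∀ i, ∑ j, γ j / (1 - u i * u j)
        = 1 / (1 - u i ^ 2) + 1 / (ρ * (q⁻¹ - q)))
    ↔ ∀ j, γ j = (∏ ℓ ∈ univ.erase j, ((u ℓ * u j - 1) / (u j - u ℓ))) *
        ((1 - u j ^ 2) / (ρ * (q⁻¹ - q)) * ∏ ℓ ∈ univ.erase j, u ℓ +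
          (if Odd r then 1 else -u j)) := by
  have hsol := sum_div_one_sub_mul_eq_one_div_add hinj h0 h1 hsq (1 / (ρ * (q⁻¹ - q)))
  simp only [Fintype.card_fin, mul_one_div] at hsol
  constructor
  · exact fun h =>
      congrFun (eq_of_sum_div_one_sub_mul_eq hinj h0 h1 fun i => (h i).trans (hsol i).symm)
  · intro h
    obtain rfl := funext h
    exact hsol

/-- Over a field `F`, with `u₁, …, u_r` distinct nonzero, `uᵢ uⱼ ≠ 1`, `uᵢ² ≠ 1`,
and `ρ, q` nonzero with `q² ≠ 1`, the unique solution `γ` of the system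
`∑ⱼ γⱼ/(1 − uᵢuⱼ) = 1/(1 − uᵢ²) + 1/(ρ(q⁻¹ − q))` is given by the explicit formula
`γⱼ = ∏_{ℓ≠j} (u_ℓ u_j − 1)/(u_j − u_ℓ) · ((1 − u_j²)/(ρ(q⁻¹−q)) ∏_{ℓ≠j} u_ℓ + c_j)`
where `c_j = 1` if `r` is odd and `c_j = −u_j` if `r` is even. -/
theorem stmt4 {F : Type*} [Field F] {r : ℕ} (u : Fin r → F)
    (hinj : Function.Injective u) (h0 : ∀ i, u i ≠ 0)
    (h1 : ∀ i j, u i * u j ≠ 1) (hsq : ∀ i, u i ^ 2 ≠ 1)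
    (ρ q : F) (hρ : ρ ≠ 0) (hq : q ≠ 0) (hq2 : q ^ 2 ≠ 1)
    (γ : Fin r → F) :
    (∀ i, ∑ j, γ j / (1 - u i * u j)
        = 1 / (1 - u i ^ 2) + 1 / (ρ * (q⁻¹ - q)))
    ↔ ∀ j, γ j = (∏ ℓ ∈ univ.erase j, ((u ℓ * u j - 1) / (u j - u ℓ))) *
        ((1 - u j ^ 2) / (ρ * (q⁻¹ - q)) * ∏ ℓ ∈ univ.erase j, u ℓ +
          (if Odd r then 1 else -u j)) :=
  stmt4_general u hinj h0 h1 hsq ρ q γ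
end

section
/- Let $r$ be odd, and let $u_1,\dots,u_r, q, \rho$ be invertible elements of a commutative ring with $q - q^{-1}$ invertible. Set $p = \prod_j u_j$, define $\gamma_j$ by the explicit formula of the $u$-admissibility condition, and set $\delta_a = \sum_{j=1}^r \gamma_j u_j^a$ for $a \ge 0$. Then $Z_1(t) := \sum_{a \ge 0} \delta_a t^{-a}$ satisfies $Z_1(t) = \frac{1}{\rho(q^{-1}-q)} + \frac{t^2}{t^2-1} + \left(\frac{\rho^{-1} p}{q - q^{-1}} + \frac{t}{t^2-1}\right) G(t^{-1})$, where $G(t) = \prod_{\ell=1}^r \frac{t-u_\ell}{t u_\ell - 1}$, as an identity of formal power series in $t^{-1}$. -/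
/-!
Put `H(x) = ∏ ℓ (x u_ℓ - 1)/(x - u_ℓ)`, so that `G(t⁻¹) = H(t)`. By Lagrange interpolation `H`
has the partial fraction expansion `H(x) = p + ∑ᵢ Wᵢ/(x - uᵢ)` with residues `Wᵢ`, and the
admissibility formula says exactly `γⱼ = Wⱼ ((uⱼ² - 1)⁻¹ - p/(ρ(q⁻¹ - q) uⱼ))`. Decomposing
`γⱼ t/(t - uⱼ)` into partial fractions in `uⱼ`, with poles at `t, 1, -1, 0`, turns `Z₁(t)` into a
combination of `H(t) - p, H(1) - p, H(-1) - p, H(0) - p`, and `H(1) = (-1)^r = -1`, `H(-1) = 1`,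
`H(0) = p⁻¹`.
-/

open Finset Polynomial Lagrange

namespace Lagrange

variable {F ι : Type*} [Field F] {s : Finset ι} {v : ι → F}

theorem coeff_card_nodal : (nodal s v).coeff #s = 1 := by
  simpa [natDegree_nodal] using (nodal_monic (s := s) (v := v)).coeff_natDegree

theorem eval_div_eval_nodal [DecidableEq ι] (hvs : Set.InjOn v s) {f : F[X]}
    (hf : f.natDegree ≤ #s) {x : F} (hx : ∀ i ∈ s, x ≠ v i) :
    f.eval x / (nodal s v).eval x
      = f.coeff #s + ∑ i ∈ s, nodalWeight s v i * f.eval (v i) / (x - v i) := by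
  set g := f - C (f.coeff #s) * nodal s v
  have hg : g.degree < #s := by
    refine (degree_lt_iff_coeff_zero g #s).2 fun m hm => ?_
    rcases hm.eq_or_lt with rfl | hlt
    · simp [g, coeff_card_nodal]
    · simp [g, coeff_eq_zero_of_natDegree_lt (hf.trans_lt hlt),
        coeff_eq_zero_of_natDegree_lt (natDegree_nodal (s := s) (v := v) ▸ hlt)]
  have hinterp := eval_interpolate_not_at_node (fun i => g.eval (v i)) hx
  rw [← eq_interpolate hvs hg] at hinterp
  have hval : ∀ i ∈ s, g.eval (v i) = f.eval (v i) := fun i hi => by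
    simp [g, eval_nodal_at_node hi]
  rw [sum_congr rfl fun i hi => by rw [hval i hi]] at hinterp
  simp only [g, eval_sub, eval_mul, eval_C] at hinterp
  rw [div_eq_iff (eval_nodal_not_at_node hx)]
  simp only [div_eq_mul_inv, mul_right_comm _ _ (x - v _)⁻¹]
  linear_combination hinterp

end Lagrange

section InvG

variable {F ι : Type*} [Field F] [Fintype ι]

/-- The paper's `G(x⁻¹)` for `x ≠ 0`, where `G(t) = ∏ ℓ (t - u_ℓ)/(t u_ℓ - 1)`. -/
def invG (u : ι → F) (x : F) : F := ∏ ℓ, (x * u ℓ - 1) / (x - u ℓ)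

def invGResidue [DecidableEq ι] (u : ι → F) (i : ι) : F :=
  nodalWeight univ u i * ∏ ℓ, (u i * u ℓ - 1)

theorem invG_eq_prod_add_sum [DecidableEq ι] {u : ι → F} (hu : Function.Injective u) {x : F}
    (hx : ∀ i, x ≠ u i) :
    invG u x = ∏ ℓ, u ℓ + ∑ i, invGResidue u i / (x - u i) := by
  have hdeg : ∀ ℓ, (X * C (u ℓ) - 1 : F[X]).natDegree ≤ 1 := fun ℓ => by compute_degree
  have hG : invG u x = (∏ ℓ, (X * C (u ℓ) - 1 : F[X])).eval x / (nodal univ u).eval x := by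
    simp only [invG, prod_div_distrib, eval_prod, eval_nodal, eval_sub, eval_mul, eval_C, eval_X,
      eval_one]
  rw [hG, eval_div_eval_nodal hu.injOn _ fun i _ => hx i]
  · congr 1
    · simpa [coeff_one] using coeff_prod_of_natDegree_le (s := univ) _ 1 fun ℓ _ => hdeg ℓ
    · refine sum_congr rfl fun i _ => ?_
      simp only [invGResidue, eval_prod, eval_sub, eval_mul, eval_C, eval_X, eval_one]
  · exact (natDegree_prod_le _ _).trans ((sum_le_sum fun ℓ _ => hdeg ℓ).trans (by simp))

theorem invG_zero (u : ι → F) : invG u 0 = (∏ ℓ, u ℓ)⁻¹ := by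
  simp [invG, prod_inv_distrib]

theorem invG_one {u : ι → F} (hu : ∀ i, u i ≠ 1) : invG u 1 = (-1) ^ Fintype.card ι := by
  rw [invG, ← card_univ, ← prod_const]
  refine prod_congr rfl fun ℓ _ => ?_
  rw [one_mul, ← neg_sub, neg_div, div_self (sub_ne_zero.2 (hu ℓ).symm)]

theorem invG_neg_one {u : ι → F} (hu : ∀ i, u i ≠ -1) : invG u (-1) = 1 := by
  refine prod_eq_one fun ℓ _ => ?_
  rw [neg_one_mul, neg_sub_left, add_comm, ← neg_sub_left, div_self]
  exact sub_ne_zero.2 (hu ℓ).symm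

theorem invG_eq_prod_inv (u : ι → F) {t : F} (ht : t ≠ 0) :
    invG u t = ∏ ℓ, (t⁻¹ - u ℓ) / (t⁻¹ * u ℓ - 1) := by
  refine prod_congr rfl fun ℓ _ => ?_
  rw [← mul_div_mul_left (t⁻¹ - u ℓ) _ ht, mul_sub, mul_sub, mul_inv_cancel₀ ht, ← mul_assoc,
    mul_inv_cancel₀ ht, one_mul, mul_one, ← neg_sub (t * u ℓ), ← neg_sub t, neg_div_neg_eq]

variable [DecidableEq ι]

theorem invGResidue_eq (u : ι → F) (j : ι) :
    invGResidue u j = (u j ^ 2 - 1) * ∏ ℓ ∈ univ.erase j, (u ℓ * u j - 1) / (u j - u ℓ) := by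
  rw [invGResidue, nodalWeight, ← mul_prod_erase univ _ (mem_univ j), prod_div_distrib]
  simp only [div_eq_mul_inv, prod_inv_distrib, mul_comm (u j)]
  ring

theorem prod_div_mul_eq_invGResidue_mul {u : ι → F} {j : ι} (hu0 : u j ≠ 0) (hu1 : u j ^ 2 ≠ 1)
    (d : F) :
    (∏ ℓ ∈ univ.erase j, (u ℓ * u j - 1) / (u j - u ℓ)) *
        ((1 - u j ^ 2) / d * ∏ ℓ ∈ univ.erase j, u ℓ + 1)
      = invGResidue u j * ((u j ^ 2 - 1)⁻¹ - (∏ ℓ, u ℓ) / d / u j) := by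
  rw [invGResidue_eq, ← mul_prod_erase univ u (mem_univ j)]
  generalize ∏ ℓ ∈ univ.erase j, (u ℓ * u j - 1) / (u j - u ℓ) = P
  generalize ∏ ℓ ∈ univ.erase j, u ℓ = Q
  have : u j ^ 2 - 1 ≠ 0 := sub_ne_zero.2 hu1
  field_simp
  ring

end InvG

theorem inv_sq_sub_one_sub_div_mul_div_sub {F : Type*} [Field F] (h2 : (2 : F) ≠ 0) {t w k : F}
    (hw0 : w ≠ 0) (hw1 : w ^ 2 ≠ 1) (htw : t ≠ w) (ht : t ^ 2 ≠ 1) :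
    ((w ^ 2 - 1)⁻¹ - k / w) * (t / (t - w))
      = (t / (t ^ 2 - 1) - k) / (t - w) - t / (2 * (t - 1)) / (1 - w)
        + t / (2 * (t + 1)) / (-1 - w) + k / (0 - w) := by
  obtain ⟨hw1', hwm1⟩ := sq_ne_one_iff.1 hw1
  obtain ⟨ht1, htm1⟩ := sq_ne_one_iff.1 ht
  have : 1 - w ≠ 0 := sub_ne_zero.2 hw1'.symm
  have : -1 - w ≠ 0 := sub_ne_zero.2 hwm1.symm
  have : t - 1 ≠ 0 := sub_ne_zero.2 ht1
  have : t + 1 ≠ 0 := fun h => htm1 (eq_neg_of_add_eq_zero_left h)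
  have hw2 : w ^ 2 - 1 ≠ 0 := sub_ne_zero.2 hw1
  have ht2 : t ^ 2 - 1 ≠ 0 := sub_ne_zero.2 ht
  have htw' : t - w ≠ 0 := sub_ne_zero.2 htw
  field_simp
  ring

theorem sum_invGResidue_mul_div_sub {F ι : Type*} [Field F] [Fintype ι] [DecidableEq ι]
    (h2 : (2 : F) ≠ 0) {u : ι → F} (hu : Function.Injective u) (hu0 : ∀ j, u j ≠ 0)
    (hu1 : ∀ j, u j ^ 2 ≠ 1) {t : F} (htu : ∀ j, t ≠ u j) (ht : t ^ 2 ≠ 1) (k : F) :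
    ∑ j, invGResidue u j * ((u j ^ 2 - 1)⁻¹ - k / u j) * (t / (t - u j))
      = (t / (t ^ 2 - 1) - k) * (invG u t - ∏ ℓ, u ℓ)
        - t / (2 * (t - 1)) * (invG u 1 - ∏ ℓ, u ℓ)
        + t / (2 * (t + 1)) * (invG u (-1) - ∏ ℓ, u ℓ) + k * (invG u 0 - ∏ ℓ, u ℓ) := by
  have hsum : ∀ x, (∀ i, x ≠ u i) → invG u x - ∏ ℓ, u ℓ = ∑ i, invGResidue u i / (x - u i) :=
    fun x hx => by rw [invG_eq_prod_add_sum hu hx, add_sub_cancel_left]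
  rw [hsum t htu, hsum 1 fun i h => (sq_ne_one_iff.1 (hu1 i)).1 h.symm,
    hsum (-1) fun i h => (sq_ne_one_iff.1 (hu1 i)).2 h.symm, hsum 0 fun i h => hu0 i h.symm]
  simp only [mul_sum, ← sum_sub_distrib, ← sum_add_distrib]
  refine sum_congr rfl fun j _ => ?_
  rw [mul_assoc, inv_sq_sub_one_sub_div_mul_div_sub h2 (hu0 j) (hu1 j) (htu j) ht]
  ring

theorem stmt10_general {r : ℕ} (hr : Odd r) (u : Fin r → ℂ)
    (hinj : Function.Injective u) (h0 : ∀ i, u i ≠ 0)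
    (h1 : ∀ i j, u i * u j ≠ 1)
    (ρ q : ℂ)
    (γ : Fin r → ℂ)
    (hγ : ∀ j, γ j = (∏ ℓ ∈ univ.erase j, ((u ℓ * u j - 1) / (u j - u ℓ))) *
        ((1 - u j ^ 2) / (ρ * (q⁻¹ - q)) * ∏ ℓ ∈ univ.erase j, u ℓ + 1))
    (t : ℂ) (ht0 : t ≠ 0) (ht1 : t ^ 2 ≠ 1) (htu : ∀ j, t ≠ u j) :
    ∑ j, γ j * (t / (t - u j))
      = 1 / (ρ * (q⁻¹ - q)) + t ^ 2 / (t ^ 2 - 1) +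
        (ρ⁻¹ * (∏ ℓ, u ℓ) / (q - q⁻¹) + t / (t ^ 2 - 1)) *
          ∏ ℓ, ((t⁻¹ - u ℓ) / (t⁻¹ * u ℓ - 1)) := by
  have hu1 : ∀ j, u j ^ 2 ≠ 1 := fun j => by simpa [sq] using h1 j j
  have hp : ∏ ℓ, u ℓ ≠ 0 := prod_ne_zero_iff.2 fun ℓ _ => h0 ℓ
  simp only [hγ, prod_div_mul_eq_invGResidue_mul (h0 _) (hu1 _)]
  rw [sum_invGResidue_mul_div_sub two_ne_zero hinj h0 hu1 htu ht1,
    invG_one fun j => (sq_ne_one_iff.1 (hu1 j)).1,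
    invG_neg_one fun j => (sq_ne_one_iff.1 (hu1 j)).2,
    invG_zero, ← invG_eq_prod_inv u ht0, Fintype.card_fin, hr.neg_one_pow]
  have hd : ρ⁻¹ * (∏ ℓ, u ℓ) / (q - q⁻¹) = -((∏ ℓ, u ℓ) / (ρ * (q⁻¹ - q))) := by
    rw [← neg_sub q⁻¹ q, div_neg, div_eq_mul_inv, div_eq_mul_inv, mul_inv]; ring
  rw [hd, one_div, div_eq_mul_inv (∏ ℓ, u ℓ)]
  generalize (ρ * (q⁻¹ - q))⁻¹ = c
  obtain ⟨ht1', htm1⟩ := sq_ne_one_iff.1 ht1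
  have : t - 1 ≠ 0 := sub_ne_zero.2 ht1'
  have : t + 1 ≠ 0 := fun h => htm1 (eq_neg_of_add_eq_zero_left h)
  have ht2 : t ^ 2 - 1 ≠ 0 := sub_ne_zero.2 ht1
  field_simp
  ring

/-- (`r` odd.)  With `γⱼ` given by the `u`-admissibility formula,
`p = ∏ⱼ uⱼ`, `δ_a = ∑ⱼ γⱼ uⱼ^a` and `Z₁(t) = ∑_{a≥0} δ_a t^{−a} = ∑ⱼ γⱼ t/(t−uⱼ)`,
one has the identity (of rational functions, stated pointwise at generic `t`):
`Z₁(t) = 1/(ρ(q⁻¹−q)) + t²/(t²−1) + (ρ⁻¹p/(q−q⁻¹) + t/(t²−1)) · G(t⁻¹)`,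
where `G(t) = ∏_ℓ (t−u_ℓ)/(t u_ℓ−1)`. -/
theorem stmt10 {r : ℕ} (hr : Odd r) (u : Fin r → ℂ)
    (hinj : Function.Injective u) (h0 : ∀ i, u i ≠ 0)
    (h1 : ∀ i j, u i * u j ≠ 1)
    (ρ q : ℂ) (hρ : ρ ≠ 0) (hq : q ≠ 0) (hq2 : q ^ 2 ≠ 1)
    (γ : Fin r → ℂ)
    (hγ : ∀ j, γ j = (∏ ℓ ∈ univ.erase j, ((u ℓ * u j - 1) / (u j - u ℓ))) *
        ((1 - u j ^ 2) / (ρ * (q⁻¹ - q)) * ∏ ℓ ∈ univ.erase j, u ℓ + 1))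
    (t : ℂ) (ht0 : t ≠ 0) (ht1 : t ^ 2 ≠ 1) (htu : ∀ j, t ≠ u j) :
    ∑ j, γ j * (t / (t - u j))
      = 1 / (ρ * (q⁻¹ - q)) + t ^ 2 / (t ^ 2 - 1) +
        (ρ⁻¹ * (∏ ℓ, u ℓ) / (q - q⁻¹) + t / (t ^ 2 - 1)) *
          ∏ ℓ, ((t⁻¹ - u ℓ) / (t⁻¹ * u ℓ - 1)) :=
  stmt10_general hr u hinj h0 h1 ρ q γ hγ t ht0 ht1 htu
end

section
/- With $\gamma_j$ defined by the $u$-admissibility formula and $\delta_0 = \sum_{j=1}^r \gamma_j$, one has $\delta_0 = \frac{1 - p^2}{\rho(q^{-1}-q)} + 1 - c$, where $p = \prod_{j=1}^r u_j$ and $c = 0$ if $r$ is odd, $c = p$ if $r$ is even. -/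
/-!
A sum `∑ⱼ f(uⱼ) / ∏_{ℓ ≠ j} (uⱼ - uℓ)` equals the coefficient of `X^(r-1)` in `f` as soon as
`deg f < r` (`Lagrange.coeff_eq_sum`). With `G = ∏ (uℓ X - 1)`,
`h = ∏ (X - uℓ)` and `p = ∏ uℓ`, both parts of the numerator of `γⱼ` are values at `uⱼ` of such
polynomials: `(1 - uⱼ²) ∏_{ℓ≠j} uℓ ∏_{ℓ≠j} (uℓ uⱼ - 1)` is the value of `(h - p G) / X`, and
`cⱼ ∏_{ℓ≠j} (uℓ uⱼ - 1)` is the value of `(c(X) G + X h) / (X² - 1)`, where `c(X) = 1` or `-X`.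
The latter is a polynomial because `uX - 1 ≡ -X (X - u)` modulo `X² - 1`, and `c(X) (-X)^r ≡ -X`.
Their coefficients of `X^(r-1)` are `1 - p²` and `1 - c`.
-/

open Finset Polynomial

namespace Polynomial

variable {R : Type*} [CommRing R]

theorem natDegree_C_mul_X_sub_one_le (a : R) : (C a * X - 1).natDegree ≤ 1 := by
  rw [sub_eq_add_neg, ← C_1, ← C_neg]
  exact natDegree_linear_le

theorem ite_odd_mul_neg_X_pow_add_X (n : ℕ) :
    (if Odd n then 1 else -X) * (-X : R[X]) ^ n + X = -X * ((X ^ 2) ^ (n / 2) - 1) := by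
  obtain ⟨k, rfl | rfl⟩ := Nat.even_or_odd' n
  · rw [if_neg (by simp [parity_simps]), Nat.mul_div_cancel_left k two_pos, pow_mul, neg_sq]
    ring
  · rw [if_pos (odd_two_mul_add_one k), show (2 * k + 1) / 2 = k by omega, pow_succ, pow_mul,
      neg_sq]
    ring

theorem natDegree_le_and_coeff_eq_of_eq_X_sq_sub_one_mul [Nontrivial R] {A Q : R[X]} {n : ℕ}
    (hQ : A = (X ^ 2 - 1) * Q) (hA : A.natDegree ≤ n + 2) :
    Q.natDegree ≤ n ∧ Q.coeff n = A.coeff (n + 2) := by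
  have hdeg : Q.natDegree ≤ n := by
    rcases eq_or_ne Q 0 with rfl | hQ0
    · simp
    have hmonic : (X ^ 2 - 1 : R[X]).Monic := by
      simpa using monic_X_pow_sub_C (1 : R) two_ne_zero
    have hd2 : (X ^ 2 - 1 : R[X]).natDegree = 2 := by
      simpa using natDegree_X_pow_sub_C (n := 2) (r := (1 : R))
    have := hmonic.natDegree_mul' hQ0
    rw [← hQ] at this
    omega
  refine ⟨hdeg, ?_⟩
  rw [hQ, sub_mul, one_mul, coeff_sub, coeff_X_pow_mul,
    coeff_eq_zero_of_natDegree_lt (by omega : Q.natDegree < n + 2), sub_zero]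

end Polynomial

namespace Lagrange

section CommRing

variable {R : Type*} [CommRing R] {ι : Type*} (s : Finset ι) (v : ι → R)

noncomputable def dualNodal : R[X] := ∏ i ∈ s, (C (v i) * X - 1)

theorem eval_dualNodal_at_node [DecidableEq ι] {j : ι} (hj : j ∈ s) :
    (dualNodal s v).eval (v j) = (v j * v j - 1) * ∏ i ∈ s.erase j, (v i * v j - 1) := by
  rw [dualNodal, eval_prod, ← mul_prod_erase s _ hj]
  simp

theorem natDegree_dualNodal_le : (dualNodal s v).natDegree ≤ #s := by
  refine (natDegree_prod_le _ _).trans ?_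
  simpa using sum_le_card_nsmul s _ 1 fun i _ => natDegree_C_mul_X_sub_one_le (v i)

theorem coeff_dualNodal_card : (dualNodal s v).coeff #s = ∏ i ∈ s, v i := by
  simpa [dualNodal, coeff_one] using
    coeff_prod_of_natDegree_le (s := s) (fun i => C (v i) * X - 1) 1
      fun i _ => natDegree_C_mul_X_sub_one_le (v i)

theorem coeff_nodal_card [Nontrivial R] : (nodal s v).coeff #s = 1 := by
  simpa [natDegree_nodal] using (nodal_monic (s := s) (v := v)).coeff_natDegree

theorem X_sq_sub_one_dvd_dualNodal_sub :
    (X ^ 2 - 1 : R[X]) ∣ dualNodal s v - (-X) ^ #s * nodal s v := by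
  have hfac : ∀ i ∈ s,
      C (v i) * X - 1 ≡ -X * (X - C (v i)) [SMOD Ideal.span {(X ^ 2 - 1 : R[X])}] := by
    intro i _
    rw [SModEq.sub_mem, Ideal.mem_span_singleton]
    exact ⟨1, by ring⟩
  have := SModEq.prod hfac
  rwa [prod_mul_distrib, prod_const, ← nodal_eq, SModEq.sub_mem, Ideal.mem_span_singleton] at this

theorem X_sq_sub_one_dvd_dualNodal_add :
    (X ^ 2 - 1 : R[X]) ∣ (if Odd #s then 1 else -X) * dualNodal s v + X * nodal s v := by
  have hpow : (X ^ 2 - 1 : R[X]) ∣ (X ^ 2) ^ (#s / 2) - 1 := by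
    simpa using sub_dvd_pow_sub_pow (X ^ 2 : R[X]) 1 (#s / 2)
  convert ((X_sq_sub_one_dvd_dualNodal_sub s v).mul_left (if Odd #s then 1 else -X)).add
    ((hpow.mul_left (-X)).mul_right (nodal s v)) using 1
  rw [← ite_odd_mul_neg_X_pow_add_X]
  ring

end CommRing

section Field

variable {F : Type*} [Field F] {ι : Type*} [DecidableEq ι] {s : Finset ι} {v : ι → F}

theorem sum_one_sub_sq_mul_prod_div (hs : s.Nonempty) (hvs : Set.InjOn v s)
    (hv : ∀ j ∈ s, v j ≠ 0) :
    ∑ j ∈ s, (1 - v j ^ 2) * (∏ i ∈ s.erase j, v i) * (∏ i ∈ s.erase j, (v i * v j - 1)) /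
      ∏ i ∈ s.erase j, (v j - v i) = 1 - (∏ i ∈ s, v i) ^ 2 := by
  set T : F[X] := nodal s v - C (∏ i ∈ s, v i) * dualNodal s v
  have hT0 : T.coeff 0 = 0 := by
    simp only [T, coeff_zero_eq_eval_zero, eval_sub, eval_mul, eval_C, eval_nodal, dualNodal,
      eval_prod]
    simp [prod_neg, mul_comm]
  have hTeval : ∀ j ∈ s, T.divX.eval (v j) =
      (1 - v j ^ 2) * (∏ i ∈ s.erase j, v i) * (∏ i ∈ s.erase j, (v i * v j - 1)) := by
    intro j hj
    have h := congrArg (eval (v j)) (X_mul_divX_add T)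
    simp only [eval_add, eval_mul, eval_X, eval_C, hT0, add_zero, T, eval_sub,
      eval_nodal_at_node hj, eval_dualNodal_at_node s v hj] at h
    apply mul_left_cancel₀ (hv j hj)
    rw [h, ← mul_prod_erase s v hj]
    ring
  have hT : T.natDegree ≤ #s := (natDegree_sub_le _ _).trans <|
    max_le natDegree_nodal.le ((natDegree_C_mul_le _ _).trans (natDegree_dualNodal_le s v))
  have hdeg : T.divX.degree < #s := (degree_lt_iff_coeff_zero _ _).2 fun m hm => by
    rw [coeff_divX]
    exact coeff_eq_zero_of_natDegree_lt (by omega)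
  calc _ = ∑ j ∈ s, T.divX.eval (v j) / ∏ i ∈ s.erase j, (v j - v i) :=
        sum_congr rfl fun j hj => by rw [hTeval j hj]
    _ = T.divX.coeff (#s - 1) := (coeff_eq_sum hvs hdeg).symm
    _ = 1 - (∏ i ∈ s, v i) ^ 2 := by
      rw [coeff_divX, Nat.sub_add_cancel hs.card_pos, coeff_sub, coeff_C_mul, coeff_nodal_card,
        coeff_dualNodal_card]
      ring

theorem sum_eval_mul_prod_div (hs : s.Nonempty) (hvs : Set.InjOn v s)
    (hv : ∀ j ∈ s, v j * v j ≠ 1) {c : F[X]} (hc : c.natDegree ≤ 1)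
    (hdvd : (X ^ 2 - 1 : F[X]) ∣ c * dualNodal s v + X * nodal s v) :
    ∑ j ∈ s, c.eval (v j) * (∏ i ∈ s.erase j, (v i * v j - 1)) / ∏ i ∈ s.erase j, (v j - v i) =
      1 + c.coeff 1 * ∏ i ∈ s, v i := by
  obtain ⟨Q, hQ⟩ := hdvd
  obtain ⟨n, hn⟩ : ∃ n, #s = n + 1 := Nat.exists_eq_succ_of_ne_zero hs.card_pos.ne'
  have hA : (c * dualNodal s v + X * nodal s v).natDegree ≤ n + 2 :=
    natDegree_add_le_of_degree_le
      ((natDegree_mul_le_of_le hc (natDegree_dualNodal_le s v)).trans (by omega))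
      ((natDegree_mul_le_of_le natDegree_X_le natDegree_nodal.le).trans (by omega))
  obtain ⟨hQdeg, hQcoeff⟩ := natDegree_le_and_coeff_eq_of_eq_X_sq_sub_one_mul hQ hA
  have hQeval : ∀ j ∈ s, Q.eval (v j) = c.eval (v j) * ∏ i ∈ s.erase j, (v i * v j - 1) := by
    intro j hj
    have h := congrArg (eval (v j)) hQ
    simp only [eval_add, eval_mul, eval_X, eval_nodal_at_node hj, eval_dualNodal_at_node s v hj,
      mul_zero, add_zero, eval_sub, eval_pow, eval_one] at h
    apply mul_left_cancel₀ (sub_ne_zero.mpr (hv j hj))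
    linear_combination -h
  have hdeg : Q.degree < #s :=
    (degree_le_of_natDegree_le hQdeg).trans_lt (by rw [hn]; exact_mod_cast n.lt_succ_self)
  calc _ = ∑ j ∈ s, Q.eval (v j) / ∏ i ∈ s.erase j, (v j - v i) :=
        sum_congr rfl fun j hj => by rw [hQeval j hj]
    _ = Q.coeff (#s - 1) := (coeff_eq_sum hvs hdeg).symm
    _ = 1 + c.coeff 1 * ∏ i ∈ s, v i := by
      rw [hn, Nat.add_sub_cancel, hQcoeff, coeff_add, show n + 2 = 1 + #s by omega,
        coeff_mul_add_eq_of_natDegree_le hc (natDegree_dualNodal_le s v), coeff_dualNodal_card,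
        add_comm 1 #s, coeff_X_mul, coeff_nodal_card, add_comm]

theorem sum_ite_odd_mul_prod_div (hs : s.Nonempty) (hvs : Set.InjOn v s)
    (hv : ∀ j ∈ s, v j * v j ≠ 1) :
    ∑ j ∈ s, (if Odd #s then 1 else -v j) * (∏ i ∈ s.erase j, (v i * v j - 1)) /
      ∏ i ∈ s.erase j, (v j - v i) = 1 - if Odd #s then 0 else ∏ i ∈ s, v i := by
  have := sum_eval_mul_prod_div hs hvs hv (c := if Odd #s then 1 else -X)
    (by split_ifs <;> simp) (X_sq_sub_one_dvd_dualNodal_add s v)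
  split_ifs at this ⊢ <;> simpa [sub_eq_add_neg, coeff_one] using this

end Field

end Lagrange

theorem stmt12_general {F : Type*} [Field F] {r : ℕ} (u : Fin r → F)
    (hinj : Function.Injective u) (h0 : ∀ i, u i ≠ 0)
    (h1 : ∀ i j, u i * u j ≠ 1)
    (ρ q : F)
    (γ : Fin r → F)
    (hγ : ∀ j, γ j = (∏ ℓ ∈ univ.erase j, ((u ℓ * u j - 1) / (u j - u ℓ))) *
        ((1 - u j ^ 2) / (ρ * (q⁻¹ - q)) * ∏ ℓ ∈ univ.erase j, u ℓ +
          (if Odd r then 1 else -u j))) :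
    ∑ j, γ j = (1 - (∏ j, u j) ^ 2) / (ρ * (q⁻¹ - q)) + 1 -
        (if Odd r then 0 else ∏ j, u j) := by
  rcases Nat.eq_zero_or_pos r with rfl | hr
  · simp
  have hs : (univ : Finset (Fin r)).Nonempty := univ_nonempty_iff.mpr ⟨⟨0, hr⟩⟩
  have hsplit : ∀ j, γ j = (ρ * (q⁻¹ - q))⁻¹ * ((1 - u j ^ 2) * (∏ ℓ ∈ univ.erase j, u ℓ) *
      (∏ ℓ ∈ univ.erase j, (u ℓ * u j - 1)) / ∏ ℓ ∈ univ.erase j, (u j - u ℓ)) +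
      (if Odd #(univ : Finset (Fin r)) then 1 else -u j) *
        (∏ ℓ ∈ univ.erase j, (u ℓ * u j - 1)) / ∏ ℓ ∈ univ.erase j, (u j - u ℓ) := by
    intro j
    rw [hγ j, prod_div_distrib, card_fin]
    ring
  rw [sum_congr rfl fun j _ => hsplit j, sum_add_distrib, ← mul_sum,
    Lagrange.sum_one_sub_sq_mul_prod_div hs hinj.injOn fun j _ => h0 j,
    Lagrange.sum_ite_odd_mul_prod_div hs hinj.injOn fun j _ => h1 j j, card_fin]
  ring

/-- With `γⱼ` given by the `u`-admissibility formula and `δ₀ = ∑ⱼ γⱼ`, one has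
`δ₀ = (1 − p²)/(ρ(q⁻¹−q)) + 1 − c`, where `p = ∏ⱼ uⱼ`, and `c = 0` if `r` is odd,
`c = p` if `r` is even. -/
theorem stmt12 {F : Type*} [Field F] {r : ℕ} (u : Fin r → F)
    (hinj : Function.Injective u) (h0 : ∀ i, u i ≠ 0)
    (h1 : ∀ i j, u i * u j ≠ 1)
    (ρ q : F) (hρ : ρ ≠ 0) (hq : q ≠ 0) (hq2 : q ^ 2 ≠ 1)
    (γ : Fin r → F)
    (hγ : ∀ j, γ j = (∏ ℓ ∈ univ.erase j, ((u ℓ * u j - 1) / (u j - u ℓ))) *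
        ((1 - u j ^ 2) / (ρ * (q⁻¹ - q)) * ∏ ℓ ∈ univ.erase j, u ℓ +
          (if Odd r then 1 else -u j))) :
    ∑ j, γ j = (1 - (∏ j, u j) ^ 2) / (ρ * (q⁻¹ - q)) + 1 -
        (if Odd r then 0 else ∏ j, u j) :=
  stmt12_general u hinj h0 h1 ρ q γ hγ
end

section
/- Assume $r$ is odd and $\rho = \prod_{j=1}^r u_j$. Then the $u$-admissibility formula for $\gamma_j$ simplifies to $\gamma_j = \frac{\rho (u_j - q^{-1})(u_j + q)}{u_j^2 (q - q^{-1})} \prod_{\ell \neq j} \frac{u_j - u_\ell^{-1}}{u_j - u_\ell}$. In particular, if $u_j \notin \{q, -q, q^{-1}, -q^{-1}\}$, then $\gamma_j \neq 0$. -/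
open Finset

/-- (`r` odd, `ρ = ∏ⱼ uⱼ`.)  The `u`-admissibility formula for `γⱼ` simplifies to
`γⱼ = ρ(uⱼ−q⁻¹)(uⱼ+q)/(uⱼ²(q−q⁻¹)) ∏_{ℓ≠j} (uⱼ−u_ℓ⁻¹)/(uⱼ−u_ℓ)`;
in particular `γⱼ ≠ 0` whenever `uⱼ ∉ {q, −q, q⁻¹, −q⁻¹}`. -/
theorem stmt13 {F : Type*} [Field F] {r : ℕ} (hr : Odd r) (u : Fin r → F)
    (hinj : Function.Injective u) (h0 : ∀ i, u i ≠ 0)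
    (h1 : ∀ i j, u i * u j ≠ 1)
    (q : F) (hq : q ≠ 0) (hq2 : q ^ 2 ≠ 1)
    (ρ : F) (hρ : ρ = ∏ j, u j)
    (γ : Fin r → F)
    (hγ : ∀ j, γ j = (∏ ℓ ∈ univ.erase j, ((u ℓ * u j - 1) / (u j - u ℓ))) *
        ((1 - u j ^ 2) / (ρ * (q⁻¹ - q)) * ∏ ℓ ∈ univ.erase j, u ℓ + 1)) :
    ∀ j, γ j = ρ * (u j - q⁻¹) * (u j + q) / (u j ^ 2 * (q - q⁻¹)) *
        ∏ ℓ ∈ univ.erase j, ((u j - (u ℓ)⁻¹) / (u j - u ℓ)) ∧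
      ((u j ≠ q ∧ u j ≠ -q ∧ u j ≠ q⁻¹ ∧ u j ≠ -q⁻¹) → γ j ≠ 0) := by
  intro j
  have huj : u j ≠ 0 := h0 j
  have hqq : q - q⁻¹ ≠ 0 := by
    refine sub_ne_zero.mpr fun h => hq2 ?_
    rw [pow_two]; nth_rewrite 2 [h]; exact mul_inv_cancel₀ hq
  have hqq' : q⁻¹ - q ≠ 0 := fun h => hqq (by
    have := neg_eq_zero.mpr h; linear_combination this)
  have hρu : ρ = u j * ∏ ℓ ∈ univ.erase j, u ℓ := by
    rw [hρ, Finset.mul_prod_erase univ u (mem_univ j)]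
  have he : (∏ ℓ ∈ univ.erase j, u ℓ) ≠ 0 :=
    Finset.prod_ne_zero_iff.mpr fun i _ => h0 i
  have hprod : ∏ ℓ ∈ univ.erase j, ((u ℓ * u j - 1) / (u j - u ℓ)) =
      (∏ ℓ ∈ univ.erase j, u ℓ) *
        ∏ ℓ ∈ univ.erase j, ((u j - (u ℓ)⁻¹) / (u j - u ℓ)) := by
    rw [← prod_mul_distrib]
    refine prod_congr rfl fun ℓ hℓ => ?_
    have hℓ0 : u ℓ ≠ 0 := h0 ℓ
    have hne : u j - u ℓ ≠ 0 :=
      sub_ne_zero.mpr fun h => (mem_erase.mp hℓ).1 (hinj h.symm)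
    field_simp
  have hmain : γ j = ρ * (u j - q⁻¹) * (u j + q) / (u j ^ 2 * (q - q⁻¹)) *
      ∏ ℓ ∈ univ.erase j, ((u j - (u ℓ)⁻¹) / (u j - u ℓ)) := by
    rw [hγ j, hprod, hρu]
    set e := ∏ ℓ ∈ univ.erase j, u ℓ with hedef
    set c := ∏ ℓ ∈ univ.erase j, ((u j - (u ℓ)⁻¹) / (u j - u ℓ)) with hcdef
    have h21 : q ^ 2 - 1 ≠ 0 := sub_ne_zero.mpr hq2
    have h12 : 1 - q ^ 2 ≠ 0 := fun h => h21 (by linear_combination -h)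
    field_simp [h21, h12]
    have h21' : q * q - 1 ≠ 0 := by rw [← sq]; exact h21
    have h12' : 1 - q * q ≠ 0 := by rw [← sq]; exact h12
    ring
  refine ⟨hmain, fun ⟨hq1, hqn, hq3, hq4⟩ => ?_⟩
  rw [hmain]
  have hρ0 : ρ ≠ 0 := by
    rw [hρ]; exact Finset.prod_ne_zero_iff.mpr fun i _ => h0 i
  have hc : (∏ ℓ ∈ univ.erase j, ((u j - (u ℓ)⁻¹) / (u j - u ℓ))) ≠ 0 := by
    refine Finset.prod_ne_zero_iff.mpr fun ℓ hℓ => ?_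
    have hℓ0 : u ℓ ≠ 0 := h0 ℓ
    have hne : u j - u ℓ ≠ 0 :=
      sub_ne_zero.mpr fun h => (mem_erase.mp hℓ).1 (hinj h.symm)
    have hni : u j - (u ℓ)⁻¹ ≠ 0 := by
      refine sub_ne_zero.mpr fun h => h1 j ℓ ?_
      rw [h]; exact inv_mul_cancel₀ hℓ0
    exact div_ne_zero hni hne
  exact mul_ne_zero (div_ne_zero (mul_ne_zero (mul_ne_zero hρ0
    (sub_ne_zero.mpr hq3)) fun h => hqn (by linear_combination h))
    (mul_ne_zero (pow_ne_zero 2 huj) hqq)) hc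
end

section
/- Let $\mu$ and $\lambda$ be $r$-tuples of Young diagrams with $\lambda$ obtained from $\mu$ by adding a single node $\alpha$ of multiplicative content $\tilde c$. Define, for any $r$-tuple of Young diagrams $\nu$, the rational function $\tilde Q(t,\nu) = p\, A(t) \prod_\beta \frac{t - b(\beta,\nu)^{-1}}{t - b(\beta,\nu)}$, the product over all addable and removable nodes $\beta$ of $\nu$, where $b(\beta,\nu)$ is the multiplicative content $\tilde c(\beta)$ for addable $\beta$ and $\tilde c(\beta)^{-1}$ for removable $\beta$. Then $\tilde Q(t,\lambda) = \tilde Q(t,\mu) \cdot \frac{(t-\tilde c)^2 (t - q^{-2}\tilde c^{-1})(t - q^2 \tilde c^{-1})}{(t - \tilde c^{-1})^2 (t - q^{-2}\tilde c)(t - q^2 \tilde c)}$. -/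
open scoped Classical
open Finset

/-- A cell is addable to a Young diagram if adjoining it yields a Young diagram. -/
def IsAddableCell (μ : YoungDiagram) (c : ℕ × ℕ) : Prop :=
  c ∉ μ ∧ ∃ ν : YoungDiagram, ν.cells = insert c μ.cells

/-- A cell of a Young diagram is removable if deleting it yields a Young diagram. -/
def IsRemovableCell (μ : YoungDiagram) (c : ℕ × ℕ) : Prop :=
  c ∈ μ ∧ ∃ ν : YoungDiagram, ν.cells = μ.cells.erase c

/-- The multiplicative content `u_j q^{2(y−x)}` of the node `β = (j, x, y)`
(component `j`, row `x`, column `y`) of an `r`-tuple of Young diagrams. -/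
noncomputable def mContent {F : Type*} [Field F] {r : ℕ} (u : Fin r → F) (q : F)
    (β : Fin r × ℕ × ℕ) : F :=
  u β.1 * q ^ (2 * ((β.2.2 : ℤ) - (β.2.1 : ℤ)))

/-- `b(β, ν)`: the content of `β` if `β` is addable to `ν`, and the inverse of the
content if `β` is removable. -/
noncomputable def bValue {F : Type*} [Field F] {r : ℕ} (u : Fin r → F) (q : F)
    (ν : Fin r → YoungDiagram) (β : Fin r × ℕ × ℕ) : F :=
  if IsAddableCell (ν β.1) β.2 then mContent u q β else (mContent u q β)⁻¹

/-- `Q̃(t, ν) = p · A(t) · ∏_β (t − b(β,ν)⁻¹)/(t − b(β,ν))`, the product over all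
addable and removable nodes `β` of the `r`-tuple of Young diagrams `ν`. -/
noncomputable def QTilde {F : Type*} [Field F] {r : ℕ} (u : Fin r → F) (q A t : F)
    (ν : Fin r → YoungDiagram) : F :=
  (∏ j, u j) * A *
    ∏ᶠ (β : Fin r × ℕ × ℕ)
      (_ : IsAddableCell (ν β.1) β.2 ∨ IsRemovableCell (ν β.1) β.2),
      (t - (bValue u q ν β)⁻¹) / (t - bValue u q ν β)


set_option maxHeartbeats 1000000

lemma notMem_iff_rowLen_le {μ : YoungDiagram} {i j : ℕ} : (i, j) ∉ μ ↔ μ.rowLen i ≤ j := by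
  rw [YoungDiagram.mem_iff_lt_rowLen, not_lt]

lemma rowLen_eq_of_mem_iff {μ ν : YoungDiagram} {i : ℕ}
    (h : ∀ j, (i, j) ∈ μ ↔ (i, j) ∈ ν) : μ.rowLen i = ν.rowLen i := by
  have key : ∀ a b : YoungDiagram, (∀ j, (i, j) ∈ a ↔ (i, j) ∈ b) →
      a.rowLen i ≤ b.rowLen i := by
    intro a b hab
    by_contra hlt
    push_neg at hlt
    have h1 : (i, b.rowLen i) ∈ a := YoungDiagram.mem_iff_lt_rowLen.2 hlt
    have h2 := (hab _).1 h1
    exact absurd (YoungDiagram.mem_iff_lt_rowLen.1 h2) (lt_irrefl _)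
  exact le_antisymm (key _ _ h) (key _ _ fun j => (h j).symm)

lemma isAddableCell_iff {μ : YoungDiagram} {x y : ℕ} :
    IsAddableCell μ (x, y) ↔ μ.rowLen x = y ∧ (x = 0 ∨ y < μ.rowLen (x - 1)) := by
  constructor
  · rintro ⟨hout, ν, hν⟩
    have hmem : ∀ p : ℕ × ℕ, p ∈ ν ↔ p = (x, y) ∨ p ∈ μ := by
      intro p
      rw [← YoungDiagram.mem_cells, hν, Finset.mem_insert, YoungDiagram.mem_cells]
    have hxy : (x, y) ∈ ν := (hmem _).2 (Or.inl rfl)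
    have hle : μ.rowLen x ≤ y := notMem_iff_rowLen_le.1 hout
    have hge : y ≤ μ.rowLen x := by
      by_contra hcon
      push_neg at hcon
      have h1 : (x, μ.rowLen x) ∈ ν := ν.up_left_mem le_rfl (le_of_lt hcon) hxy
      rcases (hmem _).1 h1 with h | h
      · have := (Prod.ext_iff.1 h).2
        simp only at this
        omega
      · exact absurd (YoungDiagram.mem_iff_lt_rowLen.1 h) (lt_irrefl _)
    refine ⟨le_antisymm hle hge, ?_⟩
    rcases Nat.eq_zero_or_pos x with hx | hx
    · exact Or.inl hx
    · right
      have h1 : (x - 1, y) ∈ ν := ν.up_left_mem (Nat.sub_le x 1) le_rfl hxy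
      rcases (hmem _).1 h1 with h | h
      · have := (Prod.ext_iff.1 h).1
        simp only at this
        omega
      · exact YoungDiagram.mem_iff_lt_rowLen.1 h
  · rintro ⟨hrow, htop⟩
    have hout : (x, y) ∉ μ := by rw [notMem_iff_rowLen_le, hrow]
    refine ⟨hout, ⟨insert (x, y) μ.cells, ?_⟩, rfl⟩
    rw [Finset.coe_insert]
    rintro ⟨a2, b2⟩ ⟨a1, b1⟩ hle h2
    obtain ⟨ha, hb⟩ : a1 ≤ a2 ∧ b1 ≤ b2 := Prod.mk_le_mk.1 hle
    rcases Set.mem_insert_iff.1 h2 with heq | h2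
    · obtain ⟨hax2, hby2⟩ : a2 = x ∧ b2 = y := Prod.ext_iff.1 heq
      by_cases hax : a1 = x
      · by_cases hby : b1 = y
        · exact Set.mem_insert_iff.2 (Or.inl (by rw [Prod.ext_iff]; exact ⟨hax, hby⟩))
        · refine Set.mem_insert_iff.2 (Or.inr ?_)
          rw [Finset.mem_coe, YoungDiagram.mem_cells, YoungDiagram.mem_iff_lt_rowLen,
            hax, hrow]
          omega
      · have hx0 : x ≠ 0 := by omega
        have hlt : y < μ.rowLen (x - 1) := htop.resolve_left hx0
        have hb1 : b1 < μ.rowLen a1 :=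
          lt_of_lt_of_le (lt_of_le_of_lt (show b1 ≤ y by omega) hlt)
            (μ.rowLen_anti a1 (x - 1) (by omega))
        refine Set.mem_insert_iff.2 (Or.inr ?_)
        rw [Finset.mem_coe, YoungDiagram.mem_cells]
        exact YoungDiagram.mem_iff_lt_rowLen.2 hb1
    · refine Set.mem_insert_iff.2 (Or.inr (μ.isLowerSet hle h2))

lemma isRemovableCell_iff {μ : YoungDiagram} {x y : ℕ} :
    IsRemovableCell μ (x, y) ↔ μ.rowLen x = y + 1 ∧ μ.rowLen (x + 1) ≤ y := by
  constructor
  · rintro ⟨hin, ν, hν⟩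
    have hmem : ∀ p : ℕ × ℕ, p ∈ ν ↔ p ∈ μ ∧ p ≠ (x, y) := by
      intro p
      rw [← YoungDiagram.mem_cells, hν, Finset.mem_erase, YoungDiagram.mem_cells, and_comm]
    have hy : y < μ.rowLen x := YoungDiagram.mem_iff_lt_rowLen.1 hin
    have h1 : μ.rowLen x = y + 1 := by
      by_contra hne
      have hlt : y + 1 < μ.rowLen x := by omega
      have h2 : (x, y + 1) ∈ ν :=
        (hmem _).2 ⟨YoungDiagram.mem_iff_lt_rowLen.2 hlt, by simp⟩
      have h3 : (x, y) ∈ ν := ν.up_left_mem le_rfl (by omega) h2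
      exact ((hmem _).1 h3).2 rfl
    refine ⟨h1, ?_⟩
    by_contra hcon
    push_neg at hcon
    have h2 : (x + 1, y) ∈ ν :=
      (hmem _).2 ⟨YoungDiagram.mem_iff_lt_rowLen.2 hcon, by simp⟩
    have h3 : (x, y) ∈ ν := ν.up_left_mem (by omega) le_rfl h2
    exact ((hmem _).1 h3).2 rfl
  · rintro ⟨h1, h2⟩
    have hin : (x, y) ∈ μ := YoungDiagram.mem_iff_lt_rowLen.2 (by omega)
    refine ⟨hin, ⟨μ.cells.erase (x, y), ?_⟩, rfl⟩
    rw [Finset.coe_erase]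
    rintro ⟨a2, b2⟩ ⟨a1, b1⟩ hle hmem2
    obtain ⟨ha, hb⟩ : a1 ≤ a2 ∧ b1 ≤ b2 := Prod.mk_le_mk.1 hle
    obtain ⟨hm2, hne2⟩ := hmem2
    refine ⟨μ.isLowerSet hle hm2, ?_⟩
    intro hstep
    rw [Set.mem_singleton_iff] at hstep
    obtain ⟨hax1, hby1⟩ : a1 = x ∧ b1 = y := Prod.ext_iff.1 hstep
    have hm2' : (a2, b2) ∈ μ := by rwa [Finset.mem_coe, YoungDiagram.mem_cells] at hm2
    have hlt2 : b2 < μ.rowLen a2 := YoungDiagram.mem_iff_lt_rowLen.1 hm2'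
    apply hne2
    rw [Set.mem_singleton_iff, Prod.ext_iff]
    rcases Nat.eq_or_lt_of_le ha with heq | hlt
    · have hra : μ.rowLen a2 = y + 1 := by rw [show a2 = x by omega]; exact h1
      exact ⟨by simp only; omega, by simp only; omega⟩
    · exfalso
      have hle2 : μ.rowLen a2 ≤ y :=
        le_trans (μ.rowLen_anti (x + 1) a2 (by omega)) h2
      omega

lemma addRem_bound {ν : YoungDiagram} {x y : ℕ}
    (h : IsAddableCell ν (x, y) ∨ IsRemovableCell ν (x, y)) :
    x ≤ ν.colLen 0 ∧ y ≤ ν.rowLen 0 := by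
  rcases h with h | h
  · rw [isAddableCell_iff] at h
    obtain ⟨h1, h2⟩ := h
    constructor
    · rcases h2 with rfl | h2
      · exact Nat.zero_le _
      · have hmem : (x - 1, 0) ∈ ν := YoungDiagram.mem_iff_lt_rowLen.2 (by omega)
        have := YoungDiagram.mem_iff_lt_colLen.1 hmem
        omega
    · rw [← h1]
      exact ν.rowLen_anti 0 x (Nat.zero_le x)
  · obtain ⟨hin, -⟩ := h
    have h1 := YoungDiagram.mem_iff_lt_colLen.1 (ν.up_left_mem le_rfl (Nat.zero_le y) hin)
    have h2 := YoungDiagram.mem_iff_lt_rowLen.1 (ν.up_left_mem le_rfl le_rfl hin)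
    have h3 := ν.rowLen_anti 0 x (Nat.zero_le x)
    omega

lemma S_finite {r : ℕ} (ν : Fin r → YoungDiagram) :
    {β : Fin r × ℕ × ℕ | IsAddableCell (ν β.1) β.2 ∨ IsRemovableCell (ν β.1) β.2}.Finite := by
  apply Set.Finite.subset
    (Set.finite_univ.prod
      ((Set.finite_Iic (Finset.univ.sup fun i => (ν i).colLen 0)).prod
        (Set.finite_Iic (Finset.univ.sup fun i => (ν i).rowLen 0))))
  rintro ⟨i, x, y⟩ hβ
  obtain ⟨h1, h2⟩ := addRem_bound hβ
  simp only [Set.mem_prod, Set.mem_univ, Set.mem_Iic, true_and]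
  exact ⟨le_trans h1 (Finset.le_sup (f := fun i => (ν i).colLen 0) (Finset.mem_univ i)),
    le_trans h2 (Finset.le_sup (f := fun i => (ν i).rowLen 0) (Finset.mem_univ i))⟩

lemma mContent_mk {F : Type*} [Field F] {r : ℕ} (u : Fin r → F) (q : F)
    (i : Fin r) (a b : ℕ) :
    mContent u q (i, a, b) = u i * q ^ (2 * ((b : ℤ) - (a : ℤ))) := rfl

lemma bValue_mk {F : Type*} [Field F] {r : ℕ} (u : Fin r → F) (q : F)
    (ν : Fin r → YoungDiagram) (i : Fin r) (a b : ℕ) :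
    bValue u q ν (i, a, b) =
      if IsAddableCell (ν i) (a, b) then mContent u q (i, a, b)
      else (mContent u q (i, a, b))⁻¹ := rfl

lemma scalA {F : Type*} [Field F] (n1 d1 n2 d2 n3 d3 : F)
    (hn1 : n1 ≠ 0) (hd1 : d1 ≠ 0) (hd2 : d2 ≠ 0) (hd3 : d3 ≠ 0) :
    n1 / d1 * (n2 / d2) * (n3 / d3) * (d1 ^ 2 * d3 * d2) =
      d1 / n1 * (n1 ^ 2 * n2 * n3) := by
  field_simp

lemma scalB {F : Type*} [Field F] (n1 d1 n2 d2 n3 d3 : F)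
    (hn1 : n1 ≠ 0) (hd1 : d1 ≠ 0) (hd2 : d2 ≠ 0) (hn3 : n3 ≠ 0) :
    n1 / d1 * (n2 / d2) * (d1 ^ 2 * d3 * d2) =
      d1 / n1 * (d3 / n3) * (n1 ^ 2 * n2 * n3) := by
  field_simp

lemma scalC {F : Type*} [Field F] (n1 d1 n2 d2 n3 d3 : F)
    (hn1 : n1 ≠ 0) (hd1 : d1 ≠ 0) (hn2 : n2 ≠ 0) (hd3 : d3 ≠ 0) :
    n1 / d1 * (n3 / d3) * (d1 ^ 2 * d3 * d2) =
      d1 / n1 * (d2 / n2) * (n1 ^ 2 * n2 * n3) := by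
  field_simp

lemma scalD {F : Type*} [Field F] (n1 d1 n2 d2 n3 d3 : F)
    (hn1 : n1 ≠ 0) (hd1 : d1 ≠ 0) (hn2 : n2 ≠ 0) (hn3 : n3 ≠ 0) :
    n1 / d1 * (d1 ^ 2 * d3 * d2) =
      d1 / n1 * (d2 / n2) * (d3 / n3) * (n1 ^ 2 * n2 * n3) := by
  field_simp

/-- If the `r`-tuple of Young diagrams `lam` is obtained from `μ` by adding a single
node `α` of multiplicative content `c`, then
`Q̃(t, lam) = Q̃(t, μ) · (t−c)²(t−q⁻²c⁻¹)(t−q²c⁻¹) / ((t−c⁻¹)²(t−q⁻²c)(t−q²c))`,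
for generic `t` (all the denominators appearing are nonzero). -/
theorem stmt19 {F : Type*} [Field F] {r : ℕ} (u : Fin r → F) (q A t : F)
    (hq : q ≠ 0) (hu : ∀ j, u j ≠ 0)
    (μ lam : Fin r → YoungDiagram) (α : Fin r × ℕ × ℕ)
    (hα : α.2 ∉ μ α.1)
    (hcells : (lam α.1).cells = insert α.2 (μ α.1).cells)
    (hrest : ∀ j, j ≠ α.1 → lam j = μ j)
    (c : F) (hc : c = mContent u q α)
    (hμt : ∀ β : Fin r × ℕ × ℕ,
      (IsAddableCell (μ β.1) β.2 ∨ IsRemovableCell (μ β.1) β.2) → t ≠ bValue u q μ β)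
    (hlamt : ∀ β : Fin r × ℕ × ℕ,
      (IsAddableCell (lam β.1) β.2 ∨ IsRemovableCell (lam β.1) β.2) →
        t ≠ bValue u q lam β)
    (hc1 : t ≠ c⁻¹) (hc2 : t ≠ q ^ (-2 : ℤ) * c) (hc3 : t ≠ q ^ (2 : ℤ) * c) :
    QTilde u q A t lam = QTilde u q A t μ *
      ((t - c) ^ 2 * (t - q ^ (-2 : ℤ) * c⁻¹) * (t - q ^ (2 : ℤ) * c⁻¹)) /
      ((t - c⁻¹) ^ 2 * (t - q ^ (-2 : ℤ) * c) * (t - q ^ (2 : ℤ) * c)) := by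
  obtain ⟨j, x, y⟩ := α
  have hadd : IsAddableCell (μ j) (x, y) := ⟨hα, lam j, hcells⟩
  obtain ⟨hrowx, htop⟩ := isAddableCell_iff.1 hadd
  have hx1 : (μ j).rowLen (x + 1) ≤ y := hrowx ▸ (μ j).rowLen_anti x (x + 1) (by omega)
  have hmemlam : ∀ pq : ℕ × ℕ, pq ∈ lam j ↔ pq = (x, y) ∨ pq ∈ μ j := by
    intro pq
    rw [← YoungDiagram.mem_cells, hcells, Finset.mem_insert, YoungDiagram.mem_cells]
  have hrowlam : ∀ a, (lam j).rowLen a = if a = x then y + 1 else (μ j).rowLen a := by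
    intro a
    by_cases ha : a = x
    · rw [if_pos ha]
      have h1 : (a, y) ∈ lam j := (hmemlam _).2 (Or.inl (by rw [ha]))
      have h2 : (a, y + 1) ∉ lam j := by
        rw [hmemlam]
        push_neg
        constructor
        · intro heq
          have := (Prod.ext_iff.1 heq).2
          omega
        · rw [YoungDiagram.mem_iff_lt_rowLen, ha, hrowx]
          omega
      rw [YoungDiagram.mem_iff_lt_rowLen] at h1
      rw [YoungDiagram.mem_iff_lt_rowLen] at h2
      omega
    · rw [if_neg ha]
      apply rowLen_eq_of_mem_iff
      intro b
      rw [hmemlam]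
      constructor
      · rintro (heq | h)
        · exact absurd (Prod.ext_iff.1 heq).1 ha
        · exact h
      · exact Or.inr
  have masterAdd : ∀ a b : ℕ,
      IsAddableCell (lam j) (a, b) ↔
        (IsAddableCell (μ j) (a, b) ∧ ¬(a = x ∧ b = y)) ∨
        (a = x ∧ b = y + 1 ∧ (x = 0 ∨ y + 1 < (μ j).rowLen (x - 1))) ∨
        (a = x + 1 ∧ b = y ∧ (μ j).rowLen (x + 1) = y) := by
    intro a b
    rcases eq_or_ne a x with rfl | hax
    · rw [isAddableCell_iff, isAddableCell_iff, hrowlam a, hrowlam (a - 1)]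
      split_ifs <;> first
        | omega
        | (simp only [false_or, or_false, true_and, and_true, false_and,
            and_false, true_or, or_true, not_false_iff, not_true]
           omega)
    · rcases eq_or_ne a (x + 1) with rfl | hax1
      · rw [isAddableCell_iff, isAddableCell_iff, Nat.add_sub_cancel,
          hrowlam (x + 1), hrowlam x]
        split_ifs <;> first
        | omega
        | (simp only [false_or, or_false, true_and, and_true, false_and,
            and_false, true_or, or_true, not_false_iff, not_true]
           omega)
      · rw [isAddableCell_iff, isAddableCell_iff, hrowlam a, hrowlam (a - 1),
          if_neg hax, if_neg (show a - 1 ≠ x by omega)]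
        omega
  have masterRem : ∀ a b : ℕ,
      IsRemovableCell (lam j) (a, b) ↔
        (IsRemovableCell (μ j) (a, b) ∧
          ¬(a + 1 = x ∧ b = y ∧ ¬(x = 0 ∨ y + 1 < (μ j).rowLen (x - 1))) ∧
          ¬(a = x ∧ b + 1 = y ∧ ¬((μ j).rowLen (x + 1) = y))) ∨
        (a = x ∧ b = y) := by
    intro a b
    rcases eq_or_ne a x with rfl | hax
    · rw [isRemovableCell_iff, isRemovableCell_iff, hrowlam a, hrowlam (a + 1)]
      split_ifs <;> first
        | omega
        | (simp only [false_or, or_false, true_and, and_true, false_and,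
            and_false, true_or, or_true, not_false_iff, not_true]
           omega)
    · rcases eq_or_ne (a + 1) x with rfl | hax1
      · rw [Nat.add_sub_cancel] at htop ⊢
        rw [isRemovableCell_iff, isRemovableCell_iff, hrowlam a, hrowlam (a + 1)]
        split_ifs <;> first
        | omega
        | (simp only [false_or, or_false, true_and, and_true, false_and,
            and_false, true_or, or_true, not_false_iff, not_true]
           omega)
      · rw [isRemovableCell_iff, isRemovableCell_iff, hrowlam a, hrowlam (a + 1),
          if_neg hax, if_neg hax1]
        omega
  have hT : ∀ β : Fin r × ℕ × ℕ, β ≠ (j, x, y) →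
      ¬(β = (j, x, y + 1) ∧ (x = 0 ∨ y + 1 < (μ j).rowLen (x - 1))) →
      ¬(β = (j, x + 1, y) ∧ (μ j).rowLen (x + 1) = y) →
      ¬(β = (j, x - 1, y) ∧ x ≠ 0 ∧ ¬(x = 0 ∨ y + 1 < (μ j).rowLen (x - 1))) →
      ¬(β = (j, x, y - 1) ∧ y ≠ 0 ∧ ¬((μ j).rowLen (x + 1) = y)) →
      ((IsAddableCell (lam β.1) β.2 ↔ IsAddableCell (μ β.1) β.2) ∧
        (IsRemovableCell (lam β.1) β.2 ↔ IsRemovableCell (μ β.1) β.2)) := by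
    rintro ⟨i, a, b⟩ hne h2e h3e h4e h5e
    simp only [ne_eq, Prod.mk.injEq] at hne h2e h3e h4e h5e ⊢
    by_cases hij : i = j
    · subst hij
      constructor
      · rw [masterAdd a b]
        constructor
        · rintro (⟨hA, -⟩ | ⟨rfl, rfl, hP⟩ | ⟨rfl, rfl, hP⟩)
          · exact hA
          · exact absurd ⟨⟨rfl, rfl, rfl⟩, hP⟩ h2e
          · exact absurd ⟨⟨rfl, rfl, rfl⟩, hP⟩ h3e
        · intro hA
          exact Or.inl ⟨hA, fun h => hne ⟨rfl, h.1, h.2⟩⟩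
      · rw [masterRem a b]
        constructor
        · rintro (⟨hR, -, -⟩ | ⟨rfl, rfl⟩)
          · exact hR
          · exact absurd ⟨rfl, rfl, rfl⟩ hne
        · intro hR
          refine Or.inl ⟨hR, ?_, ?_⟩
          · rintro ⟨hax, rfl, hP⟩
            exact h4e ⟨⟨rfl, by omega, rfl⟩, by omega, hP⟩
          · rintro ⟨rfl, hby, hP⟩
            exact h5e ⟨⟨rfl, rfl, by omega⟩, by omega, hP⟩
    · rw [hrest i hij]
      exact ⟨Iff.rfl, Iff.rfl⟩
  have hbV : ∀ β : Fin r × ℕ × ℕ,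
      (IsAddableCell (lam β.1) β.2 ↔ IsAddableCell (μ β.1) β.2) →
      bValue u q lam β = bValue u q μ β := by
    rintro ⟨i, a, b⟩ hiff
    rw [bValue_mk, bValue_mk]
    by_cases hA : IsAddableCell (μ i) (a, b)
    · rw [if_pos (hiff.2 hA), if_pos hA]
    · rw [if_neg (fun h => hA (hiff.1 h)), if_neg hA]
  have hAddLam_a0 : ¬ IsAddableCell (lam j) (x, y) := by
    rw [isAddableCell_iff, hrowlam x, hrowlam (x - 1)]
    split_ifs <;> first
        | omega
        | (simp only [false_or, or_false, true_and, and_true, false_and,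
            and_false, true_or, or_true, not_false_iff, not_true]
           omega)
  have hRemLam_a0 : IsRemovableCell (lam j) (x, y) := by
    rw [isRemovableCell_iff, hrowlam x, hrowlam (x + 1)]
    split_ifs <;> first
        | omega
        | (simp only [false_or, or_false, true_and, and_true, false_and,
            and_false, true_or, or_true, not_false_iff, not_true]
           omega)
  have hbμa0 : bValue u q μ (j, x, y) = c := by
    rw [bValue_mk, if_pos hadd]
    exact hc.symm
  have hblama0 : bValue u q lam (j, x, y) = c⁻¹ := by
    rw [bValue_mk, if_neg hAddLam_a0, hc]
  have hc0 : c ≠ 0 := by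
    rw [hc, mContent_mk]
    exact mul_ne_zero (hu j) (zpow_ne_zero _ hq)
  have hQ20 : (q : F) ^ (2 : ℤ) ≠ 0 := zpow_ne_zero _ hq
  have hQm20 : (q : F) ^ (-2 : ℤ) ≠ 0 := zpow_ne_zero _ hq
  have htc : t - c ≠ 0 :=
    sub_ne_zero_of_ne (fun h => hμt (j, x, y) (Or.inl hadd) (h.trans hbμa0.symm))
  have htci : t - c⁻¹ ≠ 0 := sub_ne_zero_of_ne hc1
  have htQ : t - q ^ (2 : ℤ) * c ≠ 0 := sub_ne_zero_of_ne hc3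
  have htQi : t - q ^ (-2 : ℤ) * c ≠ 0 := sub_ne_zero_of_ne hc2
  have hQ2 : mContent u q (j, x, y + 1) = q ^ (2 : ℤ) * c := by
    rw [hc, mContent_mk, mContent_mk,
      show 2 * (((y + 1 : ℕ) : ℤ) - (x : ℤ)) = 2 + 2 * ((y : ℤ) - (x : ℤ)) by push_cast; ring,
      zpow_add₀ hq]
    ring
  have hQ3 : mContent u q (j, x + 1, y) = q ^ (-2 : ℤ) * c := by
    rw [hc, mContent_mk, mContent_mk,
      show 2 * ((y : ℤ) - ((x + 1 : ℕ) : ℤ)) = -2 + 2 * ((y : ℤ) - (x : ℤ)) by push_cast; ring,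
      zpow_add₀ hq]
    ring
  have hQ2' : x ≠ 0 → mContent u q (j, x - 1, y) = q ^ (2 : ℤ) * c := by
    intro hx0
    rw [hc, mContent_mk, mContent_mk,
      show 2 * ((y : ℤ) - ((x - 1 : ℕ) : ℤ)) = 2 + 2 * ((y : ℤ) - (x : ℤ)) by
        rw [Nat.cast_sub (by omega : 1 ≤ x)]; push_cast; ring,
      zpow_add₀ hq]
    ring
  have hQ3' : y ≠ 0 → mContent u q (j, x, y - 1) = q ^ (-2 : ℤ) * c := by
    intro hy0
    rw [hc, mContent_mk, mContent_mk,
      show 2 * (((y - 1 : ℕ) : ℤ) - (x : ℤ)) = -2 + 2 * ((y : ℤ) - (x : ℤ)) by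
        rw [Nat.cast_sub (by omega : 1 ≤ y)]; push_cast; ring,
      zpow_add₀ hq]
    ring
  have hSμ := S_finite μ
  have hSlam := S_finite lam
  have hconv : ∀ (ν : Fin r → YoungDiagram)
      (hν : {β : Fin r × ℕ × ℕ |
        IsAddableCell (ν β.1) β.2 ∨ IsRemovableCell (ν β.1) β.2}.Finite),
      (∏ᶠ (β : Fin r × ℕ × ℕ)
        (_ : IsAddableCell (ν β.1) β.2 ∨ IsRemovableCell (ν β.1) β.2),
        (t - (bValue u q ν β)⁻¹) / (t - bValue u q ν β)) =
      ∏ β ∈ hν.toFinset, (t - (bValue u q ν β)⁻¹) / (t - bValue u q ν β) :=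
    fun ν hν => finprod_mem_eq_finite_toFinset_prod _ hν
  unfold QTilde
  rw [hconv lam hSlam, hconv μ hSμ]
  have hD : ((t - c⁻¹) ^ 2 * (t - q ^ (-2 : ℤ) * c) * (t - q ^ (2 : ℤ) * c)) ≠ 0 :=
    mul_ne_zero (mul_ne_zero (pow_ne_zero _ htci) htQi) htQ
  rw [eq_div_iff hD]
  have hmemSL : ∀ (i : Fin r) (a b : ℕ),
      ((i, a, b) : Fin r × ℕ × ℕ) ∈ hSlam.toFinset ↔
      (IsAddableCell (lam i) (a, b) ∨ IsRemovableCell (lam i) (a, b)) :=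
    fun i a b => hSlam.mem_toFinset
  have hmemSM : ∀ (i : Fin r) (a b : ℕ),
      ((i, a, b) : Fin r × ℕ × ℕ) ∈ hSμ.toFinset ↔
      (IsAddableCell (μ i) (a, b) ∨ IsRemovableCell (μ i) (a, b)) :=
    fun i a b => hSμ.mem_toFinset
  have ha0M : ((j, x, y) : Fin r × ℕ × ℕ) ∈ hSμ.toFinset := (hmemSM j x y).2 (Or.inl hadd)
  have ha0L : ((j, x, y) : Fin r × ℕ × ℕ) ∈ hSlam.toFinset :=
    (hmemSL j x y).2 (Or.inr hRemLam_a0)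
  have pne : ∀ (a b a' b' : ℕ), ¬(a = a' ∧ b = b') →
      ((j, a, b) : Fin r × ℕ × ℕ) ≠ (j, a', b') := by
    intro a b a' b' h heq
    rw [Prod.ext_iff] at heq
    have h2' := Prod.ext_iff.1 heq.2
    exact h ⟨h2'.1, h2'.2⟩
  suffices hKey :
      (∏ β ∈ hSlam.toFinset, (t - (bValue u q lam β)⁻¹) / (t - bValue u q lam β)) *
        ((t - c⁻¹) ^ 2 * (t - q ^ (-2 : ℤ) * c) * (t - q ^ (2 : ℤ) * c)) =
      (∏ β ∈ hSμ.toFinset, (t - (bValue u q μ β)⁻¹) / (t - bValue u q μ β)) *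
        ((t - c) ^ 2 * (t - q ^ (-2 : ℤ) * c⁻¹) * (t - q ^ (2 : ℤ) * c⁻¹)) by
    linear_combination (∏ j, u j) * A * hKey
  
  by_cases h2 : x = 0 ∨ y + 1 < (μ j).rowLen (x - 1)
  · by_cases h3 : (μ j).rowLen (x + 1) = y
    · -- Branch 11 : gain addable (x,y+1) and (x+1,y)
      have hAL2 : IsAddableCell (lam j) (x, y + 1) := by
        rw [masterAdd]
        exact Or.inr (Or.inl ⟨rfl, rfl, h2⟩)
      have hAL3 : IsAddableCell (lam j) (x + 1, y) := by
        rw [masterAdd]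
        exact Or.inr (Or.inr ⟨rfl, rfl, h3⟩)
      have hn2M : ((j, x, y + 1) : Fin r × ℕ × ℕ) ∉ hSμ.toFinset := by
        rw [hmemSM j x (y + 1)]
        rintro (hA | hR)
        · have := (isAddableCell_iff.1 hA).1
          omega
        · have := (isRemovableCell_iff.1 hR).1
          omega
      have hn3M : ((j, x + 1, y) : Fin r × ℕ × ℕ) ∉ hSμ.toFinset := by
        rw [hmemSM j (x + 1) y]
        rintro (hA | hR)
        · obtain ⟨hA1, hA2⟩ := isAddableCell_iff.1 hA
          rw [Nat.add_sub_cancel] at hA2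
          omega
        · have := (isRemovableCell_iff.1 hR).1
          omega
      have hbln2 : bValue u q lam (j, x, y + 1) = q ^ (2 : ℤ) * c := by
        rw [bValue_mk, if_pos hAL2, hQ2]
      have hbln3 : bValue u q lam (j, x + 1, y) = q ^ (-2 : ℤ) * c := by
        rw [bValue_mk, if_pos hAL3, hQ3]
      have hSLeq : hSlam.toFinset = insert (j, x, y) (insert (j, x, y + 1)
          (insert (j, x + 1, y) (hSμ.toFinset.erase (j, x, y)))) := by
        ext β
        obtain ⟨i, a, b⟩ := β
        simp only [Finset.mem_insert, Finset.mem_erase]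
        constructor
        · intro hβ
          by_cases e1 : ((i, a, b) : Fin r × ℕ × ℕ) = (j, x, y)
          · exact Or.inl e1
          by_cases e2 : ((i, a, b) : Fin r × ℕ × ℕ) = (j, x, y + 1)
          · exact Or.inr (Or.inl e2)
          by_cases e3 : ((i, a, b) : Fin r × ℕ × ℕ) = (j, x + 1, y)
          · exact Or.inr (Or.inr (Or.inl e3))
          refine Or.inr (Or.inr (Or.inr ⟨e1, ?_⟩))
          obtain ⟨hA, hR⟩ := hT (i, a, b) e1 (fun h => e2 h.1) (fun h => e3 h.1)
            (fun h => h.2.2 h2) (fun h => h.2.2 h3)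
          rw [hmemSM i a b]
          rw [hmemSL i a b] at hβ
          exact (or_congr hA hR).1 hβ
        · rintro (e | e | e | ⟨hne, hβ⟩)
          · rw [e]; exact ha0L
          · rw [e]; exact (hmemSL j x (y + 1)).2 (Or.inl hAL2)
          · rw [e]; exact (hmemSL j (x + 1) y).2 (Or.inl hAL3)
          · obtain ⟨hA, hR⟩ := hT (i, a, b) hne
              (fun h => hn2M (by rw [← h.1]; exact hβ))
              (fun h => hn3M (by rw [← h.1]; exact hβ))
              (fun h => h.2.2 h2) (fun h => h.2.2 h3)
            rw [hmemSL i a b]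
            rw [hmemSM i a b] at hβ
            exact (or_congr hA hR).2 hβ
      have hTprod : ∀ β ∈ hSμ.toFinset.erase (j, x, y),
          (t - (bValue u q lam β)⁻¹) / (t - bValue u q lam β) =
          (t - (bValue u q μ β)⁻¹) / (t - bValue u q μ β) := by
        intro β hβ
        obtain ⟨hne, hβM⟩ := Finset.mem_erase.1 hβ
        obtain ⟨hA, -⟩ := hT β hne
          (fun h => hn2M (by rw [← h.1]; exact hβM))
          (fun h => hn3M (by rw [← h.1]; exact hβM))
          (fun h => h.2.2 h2) (fun h => h.2.2 h3)
        rw [hbV β hA]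
      have hnm3 : ((j, x + 1, y) : Fin r × ℕ × ℕ) ∉ hSμ.toFinset.erase (j, x, y) :=
        fun h => hn3M (Finset.mem_of_mem_erase h)
      have hnm2 : ((j, x, y + 1) : Fin r × ℕ × ℕ) ∉
          insert (j, x + 1, y) (hSμ.toFinset.erase (j, x, y)) := by
        rw [Finset.mem_insert]
        rintro (h | h)
        · exact pne x (y + 1) (x + 1) y (by omega) h
        · exact hn2M (Finset.mem_of_mem_erase h)
      have hnm1 : ((j, x, y) : Fin r × ℕ × ℕ) ∉ insert (j, x, y + 1)
          (insert (j, x + 1, y) (hSμ.toFinset.erase (j, x, y))) := by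
        rw [Finset.mem_insert, Finset.mem_insert]
        rintro (h | h | h)
        · exact pne x y x (y + 1) (by omega) h
        · exact pne x y (x + 1) y (by omega) h
        · exact (Finset.mem_erase.1 h).1 rfl
      rw [hSLeq, Finset.prod_insert hnm1, Finset.prod_insert hnm2, Finset.prod_insert hnm3,
        ← Finset.mul_prod_erase _ _ ha0M, Finset.prod_congr rfl hTprod,
        hblama0, hbln2, hbln3, hbμa0]
      simp only [inv_inv, mul_inv, ← zpow_neg, neg_neg]
      linear_combination (∏ β ∈ hSμ.toFinset.erase (j, x, y),
          (t - (bValue u q μ β)⁻¹) / (t - bValue u q μ β)) *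
        scalA (t - c) (t - c⁻¹) (t - q ^ (-2 : ℤ) * c⁻¹) (t - q ^ (2 : ℤ) * c)
          (t - q ^ (2 : ℤ) * c⁻¹) (t - q ^ (-2 : ℤ) * c) htc htci htQ htQi
    · -- Branch 10 : gain addable (x,y+1), lose removable (x,y-1)
      have hAL2 : IsAddableCell (lam j) (x, y + 1) := by
        rw [masterAdd]
        exact Or.inr (Or.inl ⟨rfl, rfl, h2⟩)
      have hn2M : ((j, x, y + 1) : Fin r × ℕ × ℕ) ∉ hSμ.toFinset := by
        rw [hmemSM j x (y + 1)]
        rintro (hA | hR)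
        · have := (isAddableCell_iff.1 hA).1
          omega
        · have := (isRemovableCell_iff.1 hR).1
          omega
      have hRM3 : IsRemovableCell (μ j) (x, y - 1) := by
        rw [isRemovableCell_iff]
        omega
      have hAM3 : ¬ IsAddableCell (μ j) (x, y - 1) := by
        rw [isAddableCell_iff]
        omega
      have hm3L : ((j, x, y - 1) : Fin r × ℕ × ℕ) ∉ hSlam.toFinset := by
        rw [hmemSL j x (y - 1)]
        rintro (hA | hR)
        · rw [isAddableCell_iff, hrowlam x, hrowlam (x - 1)] at hA
          revert hA
          split_ifs <;> first
        | omega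
        | (simp only [false_or, or_false, true_and, and_true, false_and,
            and_false, true_or, or_true, not_false_iff, not_true]
           omega)
        · rw [isRemovableCell_iff, hrowlam x, hrowlam (x + 1)] at hR
          revert hR
          split_ifs <;> first
        | omega
        | (simp only [false_or, or_false, true_and, and_true, false_and,
            and_false, true_or, or_true, not_false_iff, not_true]
           omega)
      have hm3E : ((j, x, y - 1) : Fin r × ℕ × ℕ) ∈ hSμ.toFinset.erase (j, x, y) :=
        Finset.mem_erase.2 ⟨pne x (y - 1) x y (by omega),
          (hmemSM j x (y - 1)).2 (Or.inr hRM3)⟩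
      have hbln2 : bValue u q lam (j, x, y + 1) = q ^ (2 : ℤ) * c := by
        rw [bValue_mk, if_pos hAL2, hQ2]
      have hbμm3 : bValue u q μ (j, x, y - 1) = (q ^ (-2 : ℤ) * c)⁻¹ := by
        rw [bValue_mk, if_neg hAM3, hQ3' (by omega)]
      have htm3 : t - (q ^ (-2 : ℤ) * c)⁻¹ ≠ 0 :=
        sub_ne_zero_of_ne (fun h => hμt (j, x, y - 1) (Or.inr hRM3) (h.trans hbμm3.symm))
      have htm3' : t - q ^ (2 : ℤ) * c⁻¹ ≠ 0 := by
        rw [mul_inv, ← zpow_neg, neg_neg] at htm3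
        exact htm3
      have hSLeq : hSlam.toFinset = insert (j, x, y) (insert (j, x, y + 1)
          ((hSμ.toFinset.erase (j, x, y)).erase (j, x, y - 1))) := by
        ext β
        obtain ⟨i, a, b⟩ := β
        simp only [Finset.mem_insert, Finset.mem_erase]
        constructor
        · intro hβ
          by_cases e1 : ((i, a, b) : Fin r × ℕ × ℕ) = (j, x, y)
          · exact Or.inl e1
          by_cases e2 : ((i, a, b) : Fin r × ℕ × ℕ) = (j, x, y + 1)
          · exact Or.inr (Or.inl e2)
          have e5 : ((i, a, b) : Fin r × ℕ × ℕ) ≠ (j, x, y - 1) :=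
            fun h => hm3L (by rw [← h]; exact hβ)
          obtain ⟨hA, hR⟩ := hT (i, a, b) e1 (fun h => e2 h.1) (fun h => h3 h.2)
            (fun h => h.2.2 h2) (fun h => e5 h.1)
          refine Or.inr (Or.inr ⟨e5, e1, ?_⟩)
          rw [hmemSM i a b]
          rw [hmemSL i a b] at hβ
          exact (or_congr hA hR).1 hβ
        · rintro (e | e | ⟨e5, e1, hβ⟩)
          · rw [e]; exact ha0L
          · rw [e]; exact (hmemSL j x (y + 1)).2 (Or.inl hAL2)
          · obtain ⟨hA, hR⟩ := hT (i, a, b) e1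
              (fun h => hn2M (by rw [← h.1]; exact hβ))
              (fun h => h3 h.2)
              (fun h => h.2.2 h2) (fun h => e5 h.1)
            rw [hmemSL i a b]
            rw [hmemSM i a b] at hβ
            exact (or_congr hA hR).2 hβ
      have hTprod : ∀ β ∈ (hSμ.toFinset.erase (j, x, y)).erase (j, x, y - 1),
          (t - (bValue u q lam β)⁻¹) / (t - bValue u q lam β) =
          (t - (bValue u q μ β)⁻¹) / (t - bValue u q μ β) := by
        intro β hβ
        obtain ⟨e5, hβ'⟩ := Finset.mem_erase.1 hβ
        obtain ⟨e1, hβM⟩ := Finset.mem_erase.1 hβ'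
        obtain ⟨hA, -⟩ := hT β e1
          (fun h => hn2M (by rw [← h.1]; exact hβM))
          (fun h => h3 h.2)
          (fun h => h.2.2 h2) (fun h => e5 h.1)
        rw [hbV β hA]
      have hnm2 : ((j, x, y + 1) : Fin r × ℕ × ℕ) ∉
          (hSμ.toFinset.erase (j, x, y)).erase (j, x, y - 1) :=
        fun h => hn2M (Finset.mem_of_mem_erase (Finset.mem_of_mem_erase h))
      have hnm1 : ((j, x, y) : Fin r × ℕ × ℕ) ∉ insert (j, x, y + 1)
          ((hSμ.toFinset.erase (j, x, y)).erase (j, x, y - 1)) := by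
        rw [Finset.mem_insert]
        rintro (h | h)
        · exact pne x y x (y + 1) (by omega) h
        · exact (Finset.mem_erase.1 (Finset.mem_of_mem_erase h)).1 rfl
      rw [hSLeq, Finset.prod_insert hnm1, Finset.prod_insert hnm2,
        ← Finset.mul_prod_erase _ _ ha0M, ← Finset.mul_prod_erase _ _ hm3E,
        Finset.prod_congr rfl hTprod, hblama0, hbln2, hbμa0, hbμm3]
      simp only [inv_inv, mul_inv, ← zpow_neg, neg_neg]
      linear_combination (∏ β ∈ (hSμ.toFinset.erase (j, x, y)).erase (j, x, y - 1),
          (t - (bValue u q μ β)⁻¹) / (t - bValue u q μ β)) *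
        scalB (t - c) (t - c⁻¹) (t - q ^ (-2 : ℤ) * c⁻¹) (t - q ^ (2 : ℤ) * c)
          (t - q ^ (2 : ℤ) * c⁻¹) (t - q ^ (-2 : ℤ) * c) htc htci htQ htm3'
  · by_cases h3 : (μ j).rowLen (x + 1) = y
    · -- Branch 01 : gain addable (x+1,y), lose removable (x-1,y)
      have hAL3 : IsAddableCell (lam j) (x + 1, y) := by
        rw [masterAdd]
        exact Or.inr (Or.inr ⟨rfl, rfl, h3⟩)
      have hn3M : ((j, x + 1, y) : Fin r × ℕ × ℕ) ∉ hSμ.toFinset := by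
        rw [hmemSM j (x + 1) y]
        rintro (hA | hR)
        · obtain ⟨hA1, hA2⟩ := isAddableCell_iff.1 hA
          rw [Nat.add_sub_cancel] at hA2
          omega
        · have := (isRemovableCell_iff.1 hR).1
          omega
      have hRM2 : IsRemovableCell (μ j) (x - 1, y) := by
        rw [isRemovableCell_iff, show x - 1 + 1 = x by omega]
        omega
      have hAM2 : ¬ IsAddableCell (μ j) (x - 1, y) := by
        rw [isAddableCell_iff]
        omega
      have hm2L : ((j, x - 1, y) : Fin r × ℕ × ℕ) ∉ hSlam.toFinset := by
        rw [hmemSL j (x - 1) y]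
        rintro (hA | hR)
        · rw [isAddableCell_iff, hrowlam (x - 1), hrowlam (x - 1 - 1)] at hA
          revert hA
          split_ifs <;> first
        | omega
        | (simp only [false_or, or_false, true_and, and_true, false_and,
            and_false, true_or, or_true, not_false_iff, not_true]
           omega)
        · rw [isRemovableCell_iff, show x - 1 + 1 = x by omega,
            hrowlam (x - 1), hrowlam x] at hR
          revert hR
          split_ifs <;> first
        | omega
        | (simp only [false_or, or_false, true_and, and_true, false_and,
            and_false, true_or, or_true, not_false_iff, not_true]
           omega)
      have hm2E : ((j, x - 1, y) : Fin r × ℕ × ℕ) ∈ hSμ.toFinset.erase (j, x, y) :=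
        Finset.mem_erase.2 ⟨pne (x - 1) y x y (by omega),
          (hmemSM j (x - 1) y).2 (Or.inr hRM2)⟩
      have hbln3 : bValue u q lam (j, x + 1, y) = q ^ (-2 : ℤ) * c := by
        rw [bValue_mk, if_pos hAL3, hQ3]
      have hbμm2 : bValue u q μ (j, x - 1, y) = (q ^ (2 : ℤ) * c)⁻¹ := by
        rw [bValue_mk, if_neg hAM2, hQ2' (by omega)]
      have htm2 : t - (q ^ (2 : ℤ) * c)⁻¹ ≠ 0 :=
        sub_ne_zero_of_ne (fun h => hμt (j, x - 1, y) (Or.inr hRM2) (h.trans hbμm2.symm))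
      have htm2' : t - q ^ (-2 : ℤ) * c⁻¹ ≠ 0 := by
        rw [mul_inv, ← zpow_neg] at htm2
        exact htm2
      have hSLeq : hSlam.toFinset = insert (j, x, y) (insert (j, x + 1, y)
          ((hSμ.toFinset.erase (j, x, y)).erase (j, x - 1, y))) := by
        ext β
        obtain ⟨i, a, b⟩ := β
        simp only [Finset.mem_insert, Finset.mem_erase]
        constructor
        · intro hβ
          by_cases e1 : ((i, a, b) : Fin r × ℕ × ℕ) = (j, x, y)
          · exact Or.inl e1
          by_cases e3 : ((i, a, b) : Fin r × ℕ × ℕ) = (j, x + 1, y)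
          · exact Or.inr (Or.inl e3)
          have e4 : ((i, a, b) : Fin r × ℕ × ℕ) ≠ (j, x - 1, y) :=
            fun h => hm2L (by rw [← h]; exact hβ)
          obtain ⟨hA, hR⟩ := hT (i, a, b) e1 (fun h => h2 h.2) (fun h => e3 h.1)
            (fun h => e4 h.1) (fun h => h.2.2 h3)
          refine Or.inr (Or.inr ⟨e4, e1, ?_⟩)
          rw [hmemSM i a b]
          rw [hmemSL i a b] at hβ
          exact (or_congr hA hR).1 hβ
        · rintro (e | e | ⟨e4, e1, hβ⟩)
          · rw [e]; exact ha0L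
          · rw [e]; exact (hmemSL j (x + 1) y).2 (Or.inl hAL3)
          · obtain ⟨hA, hR⟩ := hT (i, a, b) e1
              (fun h => h2 h.2)
              (fun h => hn3M (by rw [← h.1]; exact hβ))
              (fun h => e4 h.1) (fun h => h.2.2 h3)
            rw [hmemSL i a b]
            rw [hmemSM i a b] at hβ
            exact (or_congr hA hR).2 hβ
      have hTprod : ∀ β ∈ (hSμ.toFinset.erase (j, x, y)).erase (j, x - 1, y),
          (t - (bValue u q lam β)⁻¹) / (t - bValue u q lam β) =
          (t - (bValue u q μ β)⁻¹) / (t - bValue u q μ β) := by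
        intro β hβ
        obtain ⟨e4, hβ'⟩ := Finset.mem_erase.1 hβ
        obtain ⟨e1, hβM⟩ := Finset.mem_erase.1 hβ'
        obtain ⟨hA, -⟩ := hT β e1
          (fun h => h2 h.2)
          (fun h => hn3M (by rw [← h.1]; exact hβM))
          (fun h => e4 h.1) (fun h => h.2.2 h3)
        rw [hbV β hA]
      have hnm2 : ((j, x + 1, y) : Fin r × ℕ × ℕ) ∉
          (hSμ.toFinset.erase (j, x, y)).erase (j, x - 1, y) :=
        fun h => hn3M (Finset.mem_of_mem_erase (Finset.mem_of_mem_erase h))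
      have hnm1 : ((j, x, y) : Fin r × ℕ × ℕ) ∉ insert (j, x + 1, y)
          ((hSμ.toFinset.erase (j, x, y)).erase (j, x - 1, y)) := by
        rw [Finset.mem_insert]
        rintro (h | h)
        · exact pne x y (x + 1) y (by omega) h
        · exact (Finset.mem_erase.1 (Finset.mem_of_mem_erase h)).1 rfl
      rw [hSLeq, Finset.prod_insert hnm1, Finset.prod_insert hnm2,
        ← Finset.mul_prod_erase _ _ ha0M, ← Finset.mul_prod_erase _ _ hm2E,
        Finset.prod_congr rfl hTprod, hblama0, hbln3, hbμa0, hbμm2]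
      simp only [inv_inv, mul_inv, ← zpow_neg, neg_neg]
      linear_combination (∏ β ∈ (hSμ.toFinset.erase (j, x, y)).erase (j, x - 1, y),
          (t - (bValue u q μ β)⁻¹) / (t - bValue u q μ β)) *
        scalC (t - c) (t - c⁻¹) (t - q ^ (-2 : ℤ) * c⁻¹) (t - q ^ (2 : ℤ) * c)
          (t - q ^ (2 : ℤ) * c⁻¹) (t - q ^ (-2 : ℤ) * c) htc htci htm2' htQi
    · -- Branch 00 : lose removable (x-1,y) and (x,y-1)
      have hRM2 : IsRemovableCell (μ j) (x - 1, y) := by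
        rw [isRemovableCell_iff, show x - 1 + 1 = x by omega]
        omega
      have hAM2 : ¬ IsAddableCell (μ j) (x - 1, y) := by
        rw [isAddableCell_iff]
        omega
      have hm2L : ((j, x - 1, y) : Fin r × ℕ × ℕ) ∉ hSlam.toFinset := by
        rw [hmemSL j (x - 1) y]
        rintro (hA | hR)
        · rw [isAddableCell_iff, hrowlam (x - 1), hrowlam (x - 1 - 1)] at hA
          revert hA
          split_ifs <;> first
        | omega
        | (simp only [false_or, or_false, true_and, and_true, false_and,
            and_false, true_or, or_true, not_false_iff, not_true]
           omega)
        · rw [isRemovableCell_iff, show x - 1 + 1 = x by omega,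
            hrowlam (x - 1), hrowlam x] at hR
          revert hR
          split_ifs <;> first
        | omega
        | (simp only [false_or, or_false, true_and, and_true, false_and,
            and_false, true_or, or_true, not_false_iff, not_true]
           omega)
      have hRM3 : IsRemovableCell (μ j) (x, y - 1) := by
        rw [isRemovableCell_iff]
        omega
      have hAM3 : ¬ IsAddableCell (μ j) (x, y - 1) := by
        rw [isAddableCell_iff]
        omega
      have hm3L : ((j, x, y - 1) : Fin r × ℕ × ℕ) ∉ hSlam.toFinset := by
        rw [hmemSL j x (y - 1)]
        rintro (hA | hR)
        · rw [isAddableCell_iff, hrowlam x, hrowlam (x - 1)] at hA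
          revert hA
          split_ifs <;> first
        | omega
        | (simp only [false_or, or_false, true_and, and_true, false_and,
            and_false, true_or, or_true, not_false_iff, not_true]
           omega)
        · rw [isRemovableCell_iff, hrowlam x, hrowlam (x + 1)] at hR
          revert hR
          split_ifs <;> first
        | omega
        | (simp only [false_or, or_false, true_and, and_true, false_and,
            and_false, true_or, or_true, not_false_iff, not_true]
           omega)
      have hm2E : ((j, x - 1, y) : Fin r × ℕ × ℕ) ∈ hSμ.toFinset.erase (j, x, y) :=
        Finset.mem_erase.2 ⟨pne (x - 1) y x y (by omega),
          (hmemSM j (x - 1) y).2 (Or.inr hRM2)⟩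
      have hm3E : ((j, x, y - 1) : Fin r × ℕ × ℕ) ∈
          (hSμ.toFinset.erase (j, x, y)).erase (j, x - 1, y) :=
        Finset.mem_erase.2 ⟨pne x (y - 1) (x - 1) y (by omega),
          Finset.mem_erase.2 ⟨pne x (y - 1) x y (by omega),
            (hmemSM j x (y - 1)).2 (Or.inr hRM3)⟩⟩
      have hbμm2 : bValue u q μ (j, x - 1, y) = (q ^ (2 : ℤ) * c)⁻¹ := by
        rw [bValue_mk, if_neg hAM2, hQ2' (by omega)]
      have hbμm3 : bValue u q μ (j, x, y - 1) = (q ^ (-2 : ℤ) * c)⁻¹ := by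
        rw [bValue_mk, if_neg hAM3, hQ3' (by omega)]
      have htm2 : t - (q ^ (2 : ℤ) * c)⁻¹ ≠ 0 :=
        sub_ne_zero_of_ne (fun h => hμt (j, x - 1, y) (Or.inr hRM2) (h.trans hbμm2.symm))
      have htm2' : t - q ^ (-2 : ℤ) * c⁻¹ ≠ 0 := by
        rw [mul_inv, ← zpow_neg] at htm2
        exact htm2
      have htm3 : t - (q ^ (-2 : ℤ) * c)⁻¹ ≠ 0 :=
        sub_ne_zero_of_ne (fun h => hμt (j, x, y - 1) (Or.inr hRM3) (h.trans hbμm3.symm))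
      have htm3' : t - q ^ (2 : ℤ) * c⁻¹ ≠ 0 := by
        rw [mul_inv, ← zpow_neg, neg_neg] at htm3
        exact htm3
      have hSLeq : hSlam.toFinset = insert (j, x, y)
          (((hSμ.toFinset.erase (j, x, y)).erase (j, x - 1, y)).erase (j, x, y - 1)) := by
        ext β
        obtain ⟨i, a, b⟩ := β
        simp only [Finset.mem_insert, Finset.mem_erase]
        constructor
        · intro hβ
          by_cases e1 : ((i, a, b) : Fin r × ℕ × ℕ) = (j, x, y)
          · exact Or.inl e1
          have e4 : ((i, a, b) : Fin r × ℕ × ℕ) ≠ (j, x - 1, y) :=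
            fun h => hm2L (by rw [← h]; exact hβ)
          have e5 : ((i, a, b) : Fin r × ℕ × ℕ) ≠ (j, x, y - 1) :=
            fun h => hm3L (by rw [← h]; exact hβ)
          obtain ⟨hA, hR⟩ := hT (i, a, b) e1 (fun h => h2 h.2) (fun h => h3 h.2)
            (fun h => e4 h.1) (fun h => e5 h.1)
          refine Or.inr ⟨e5, e4, e1, ?_⟩
          rw [hmemSM i a b]
          rw [hmemSL i a b] at hβ
          exact (or_congr hA hR).1 hβ
        · rintro (e | ⟨e5, e4, e1, hβ⟩)
          · rw [e]; exact ha0L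
          · obtain ⟨hA, hR⟩ := hT (i, a, b) e1 (fun h => h2 h.2) (fun h => h3 h.2)
              (fun h => e4 h.1) (fun h => e5 h.1)
            rw [hmemSL i a b]
            rw [hmemSM i a b] at hβ
            exact (or_congr hA hR).2 hβ
      have hTprod : ∀ β ∈ ((hSμ.toFinset.erase (j, x, y)).erase (j, x - 1, y)).erase
          (j, x, y - 1),
          (t - (bValue u q lam β)⁻¹) / (t - bValue u q lam β) =
          (t - (bValue u q μ β)⁻¹) / (t - bValue u q μ β) := by
        intro β hβ
        obtain ⟨e5, hβ'⟩ := Finset.mem_erase.1 hβ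
        obtain ⟨e4, hβ''⟩ := Finset.mem_erase.1 hβ'
        obtain ⟨e1, hβM⟩ := Finset.mem_erase.1 hβ''
        obtain ⟨hA, -⟩ := hT β e1 (fun h => h2 h.2) (fun h => h3 h.2)
          (fun h => e4 h.1) (fun h => e5 h.1)
        rw [hbV β hA]
      have hnm1 : ((j, x, y) : Fin r × ℕ × ℕ) ∉
          ((hSμ.toFinset.erase (j, x, y)).erase (j, x - 1, y)).erase (j, x, y - 1) :=
        fun h => (Finset.mem_erase.1
          (Finset.mem_of_mem_erase (Finset.mem_of_mem_erase h))).1 rfl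
      rw [hSLeq, Finset.prod_insert hnm1,
        ← Finset.mul_prod_erase _ _ ha0M, ← Finset.mul_prod_erase _ _ hm2E,
        ← Finset.mul_prod_erase _ _ hm3E,
        Finset.prod_congr rfl hTprod, hblama0, hbμa0, hbμm2, hbμm3]
      simp only [inv_inv, mul_inv, ← zpow_neg, neg_neg]
      linear_combination (∏ β ∈ ((hSμ.toFinset.erase (j, x, y)).erase
            (j, x - 1, y)).erase (j, x, y - 1),
          (t - (bValue u q μ β)⁻¹) / (t - bValue u q μ β)) *
        scalD (t - c) (t - c⁻¹) (t - q ^ (-2 : ℤ) * c⁻¹) (t - q ^ (2 : ℤ) * c)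
          (t - q ^ (2 : ℤ) * c⁻¹) (t - q ^ (-2 : ℤ) * c) htc htci htm2' htm3'
end
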